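/- arXiv:2008.13735 — 5 statements merged into one kernel-verified Lean document; each statement's English description precedes it below -/
import Mathlib

section
/- Let V ⊆ [n], let x ∈ ℝⁿ with ‖x‖₂ = √n and ‖x‖_∞² ≤ n^{1−ε} for some constant ε ∈ (0,1), and let t₁, t₂ ∈ ℕ. Define S_{t₁,t₂,V} = E[ ∏_{i=1}^{t₁} x_{v_i}² · ∏_{i=t₁+1}^{t₁+t₂} x_{v_i}⁴ ], where (v₁,…,v_{t₁+t₂}) is a uniformly random ordered tuple of pairwise distinct elements of [n]∖V. If |V|, t₁, t₂ ≤ K log n for a constant K, then there is a constant c > 0 (depending only on ε and K) such that for all sufficiently large n: S_{t₁,t₂,V} ≤ (1 + n^{−c}) ‖x‖_∞^{2t₂}; moreover if t₂ = 0 then S_{t₁,0,V} ≥ 1 − n^{−c}. -/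
/-!
Write `W = [n] ∖ V` and `t = t₁ + t₂`. Choosing the entries of an injective tuple one at a time,
the sum of `∏ g(vᵢ)` over injective `t`-tuples in `W` (for `0 ≤ g ≤ B`) lies between
`(∑_W g - t B)^t` and `(∑_W g)^t`; with `g = 1` this bounds the number of tuples by
`(|W| - t)^t` and `n^t`. Taking `g = x²`, each fourth power costs at most a factor `‖x‖_∞²`.
As `|V|, t = O(log n)` and `‖x‖_∞² ≤ n^{1-ε}`, Bernoulli's inequality turns all ratios into
`1 ± O(log² n · n^{-ε})`, which is below `n^{-ε/2}` for large `n`.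
-/

open Finset Filter Real

section InjTuples

variable {α R : Type*} [Fintype α] [DecidableEq α]

def injTuples (W : Finset α) (t : ℕ) : Finset (Fin t → α) :=
  univ.filter fun v => Function.Injective v ∧ ∀ i, v i ∈ W

@[simp]
lemma mem_injTuples {W : Finset α} {t : ℕ} {v : Fin t → α} :
    v ∈ injTuples W t ↔ Function.Injective v ∧ ∀ i, v i ∈ W := by
  simp [injTuples]

lemma injTuples_zero (W : Finset α) : injTuples W 0 = univ :=
  eq_univ_of_forall fun v => mem_injTuples.2 ⟨Function.injective_of_subsingleton v, finZeroElim⟩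

lemma sum_prod_injTuples_succ [CommSemiring R] (g : α → R) (W : Finset α) (t : ℕ) :
    ∑ v ∈ injTuples W (t + 1), ∏ i, g (v i)
      = ∑ j ∈ W, g j * ∑ v ∈ injTuples (W.erase j) t, ∏ i, g (v i) := by
  simp_rw [mul_sum]
  rw [← sum_sigma W (fun j => injTuples (W.erase j) t) (fun p => g p.1 * ∏ i, g (p.2 i))]
  refine sum_nbij' (fun v => ⟨v 0, Fin.tail v⟩) (fun p => Fin.cons p.1 p.2) ?_ ?_
    (fun v _ => Fin.cons_self_tail v) (fun p _ => by simp) (fun v _ => Fin.prod_univ_succ _)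
  · intro v hv
    obtain ⟨hinj, hW⟩ := mem_injTuples.1 (mem_coe.1 hv)
    refine mem_sigma.2 ⟨hW 0, mem_injTuples.2 ⟨fun a b hab => Fin.succ_injective _ (hinj hab),
      fun i => mem_erase.2 ⟨fun h => Fin.succ_ne_zero i (hinj h), hW _⟩⟩⟩
  · rintro ⟨j, w⟩ hp
    obtain ⟨hj, hw⟩ := mem_sigma.1 (mem_coe.1 hp)
    obtain ⟨hinj, hW⟩ := mem_injTuples.1 hw
    refine mem_injTuples.2 ⟨Fin.cons_injective_iff.2 ⟨fun ⟨i, hi⟩ => (mem_erase.1 (hW i)).1 hi,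
      hinj⟩, Fin.cases hj fun i => (mem_erase.1 (hW i)).2⟩

variable [CommRing R] [LinearOrder R] [IsStrictOrderedRing R]

lemma sum_prod_injTuples_le_pow {g : α → R} (hg : ∀ j, 0 ≤ g j) (t : ℕ) (W : Finset α) :
    ∑ v ∈ injTuples W t, ∏ i, g (v i) ≤ (∑ j ∈ W, g j) ^ t := by
  induction t generalizing W with
  | zero => simp [injTuples_zero]
  | succ t ih =>
    rw [sum_prod_injTuples_succ, pow_succ', sum_mul]
    refine sum_le_sum fun j _ => mul_le_mul_of_nonneg_left ((ih _).trans ?_) (hg j)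
    exact pow_le_pow_left₀ (sum_nonneg fun j _ => hg j)
      (sum_le_sum_of_subset_of_nonneg (erase_subset _ _) fun j _ _ => hg j) t

/-- Each chosen entry removes at most `B` from the mass `∑ g` still available. -/
lemma pow_le_sum_prod_injTuples {g : α → R} {B : R} (hg : ∀ j, 0 ≤ g j) (hgB : ∀ j, g j ≤ B)
    (hB : 0 ≤ B) (t : ℕ) (W : Finset α) {A : R} (hA : 0 ≤ A)
    (hAW : A + t * B ≤ ∑ j ∈ W, g j) :
    A ^ t ≤ ∑ v ∈ injTuples W t, ∏ i, g (v i) := by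
  induction t generalizing W with
  | zero => simp [injTuples_zero]
  | succ t ih =>
    have hA_le : A ≤ ∑ j ∈ W, g j :=
      (le_add_of_nonneg_right (mul_nonneg (Nat.cast_nonneg _) hB)).trans hAW
    rw [sum_prod_injTuples_succ, pow_succ']
    calc A * A ^ t ≤ (∑ j ∈ W, g j) * A ^ t := mul_le_mul_of_nonneg_right hA_le (pow_nonneg hA t)
      _ = ∑ j ∈ W, g j * A ^ t := sum_mul _ _ _
      _ ≤ _ := by
        refine sum_le_sum fun j hj => mul_le_mul_of_nonneg_left (ih _ ?_) (hg j)
        rw [← add_sum_erase W g hj] at hAW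
        push_cast at hAW
        linarith [hgB j]

lemma card_injTuples_le (W : Finset α) (t : ℕ) : ((injTuples W t).card : R) ≤ (W.card : R) ^ t := by
  simpa using sum_prod_injTuples_le_pow (g := fun _ : α => (1 : R)) (fun _ => zero_le_one) t W

lemma sub_pow_le_card_injTuples (W : Finset α) {t : ℕ} (ht : t ≤ W.card) :
    ((W.card : R) - t) ^ t ≤ (injTuples W t).card := by
  simpa using pow_le_sum_prod_injTuples (g := fun _ : α => (1 : R)) (fun _ => zero_le_one)
    (fun _ => le_rfl) zero_le_one t W (sub_nonneg.2 (by exact_mod_cast ht)) (by simp)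

end InjTuples

lemma pow_mul_one_sub_le_sub_pow {m a : ℝ} (hm : 0 < m) (ha : a ≤ 2 * m) (t : ℕ) :
    m ^ t * (1 - t * a / m) ≤ (m - a) ^ t := by
  have hbern := one_add_mul_le_pow (a := -(a / m))
    (by rw [neg_le_neg_iff, div_le_iff₀ hm]; linarith) t
  calc m ^ t * (1 - t * a / m) = m ^ t * (1 + t * -(a / m)) := by ring
    _ ≤ m ^ t * (1 + -(a / m)) ^ t := mul_le_mul_of_nonneg_left hbern (by positivity)
    _ = (m - a) ^ t := by rw [← mul_pow]; congr 1; field_simp; ring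

section MixedMoment

variable {n : ℕ}

/-- The average `S_{t₁,t₂,V}`. -/
noncomputable def mixedMoment (x : Fin n → ℝ) (V : Finset (Fin n)) (t₁ t₂ : ℕ) : ℝ :=
  (∑ v ∈ injTuples Vᶜ (t₁ + t₂), ∏ i : Fin (t₁ + t₂),
      (if (i : ℕ) < t₁ then x (v i) ^ 2 else x (v i) ^ 4)) / (injTuples Vᶜ (t₁ + t₂)).card

lemma sq_apply_le_norm_sq {ι : Type*} [Fintype ι] (x : ι → ℝ) (j : ι) : x j ^ 2 ≤ ‖x‖ ^ 2 := by
  simpa only [Real.norm_eq_abs, sq_abs] using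
    pow_le_pow_left₀ (norm_nonneg _) (norm_le_pi_norm x j) 2

lemma prod_ite_sq_pow_four_le {t₁ t₂ : ℕ} {y : Fin (t₁ + t₂) → ℝ} {B : ℝ}
    (hy : ∀ i, y i ^ 2 ≤ B) :
    ∏ i : Fin (t₁ + t₂), (if (i : ℕ) < t₁ then y i ^ 2 else y i ^ 4) ≤ B ^ t₂ * ∏ i, y i ^ 2 := by
  simp only [Fin.prod_univ_add, Fin.val_castAdd, Fin.is_lt, if_true, Fin.val_natAdd,
    show ∀ i : Fin t₂, ¬ t₁ + (i : ℕ) < t₁ from fun _ => by omega, if_false]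
  rw [mul_left_comm, ← Fin.prod_const t₂ B, ← prod_mul_distrib]
  refine mul_le_mul_of_nonneg_left (prod_le_prod (fun i _ => by positivity) fun i _ => ?_)
    (prod_nonneg fun i _ => by positivity)
  rw [show y (Fin.natAdd t₁ i) ^ 4 = y (Fin.natAdd t₁ i) ^ 2 * y (Fin.natAdd t₁ i) ^ 2 by ring]
  exact mul_le_mul_of_nonneg_right (hy _) (by positivity)

lemma pow_mul_one_sub_le_card_injTuples_compl (V : Finset (Fin n)) {t : ℕ} {η : ℝ} (hn : 0 < n)
    (ha : (V.card : ℝ) + t ≤ n) (hta : t * ((V.card : ℝ) + t) ≤ η * n) :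
    (n : ℝ) ^ t * (1 - η) ≤ (injTuples Vᶜ t).card := by
  have hn' : (0 : ℝ) < n := Nat.cast_pos.2 hn
  have hcompl : ((Vᶜ).card : ℝ) = n - V.card := by
    rw [card_compl, Fintype.card_fin,
      Nat.cast_sub (card_le_univ V |>.trans_eq (Fintype.card_fin n))]
  have ht : t ≤ (Vᶜ).card := by exact_mod_cast (show (t : ℝ) ≤ (Vᶜ).card by rw [hcompl]; linarith)
  calc (n : ℝ) ^ t * (1 - η) ≤ n ^ t * (1 - t * (V.card + t) / n) := by
        gcongr; rwa [div_le_iff₀ hn']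
    _ ≤ (n - (V.card + t)) ^ t := pow_mul_one_sub_le_sub_pow hn' (by linarith) t
    _ = ((Vᶜ).card - t) ^ t := by rw [hcompl, sub_add_eq_sub_sub]
    _ ≤ (injTuples Vᶜ t).card := sub_pow_le_card_injTuples _ ht

lemma mixedMoment_le (hn : 0 < n) {x : Fin n → ℝ} (hx : ∑ i, x i ^ 2 ≤ n) (V : Finset (Fin n))
    (t₁ t₂ : ℕ) {η : ℝ} (hη0 : 0 ≤ η) (hη1 : η ≤ 1) (ha : (V.card : ℝ) + ↑(t₁ + t₂) ≤ n)
    (hta : ↑(t₁ + t₂) * ((V.card : ℝ) + ↑(t₁ + t₂)) ≤ η / 2 * n) :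
    mixedMoment x V t₁ t₂ ≤ (1 + η) * ‖x‖ ^ (2 * t₂) := by
  set t := t₁ + t₂
  set B := ‖x‖ ^ 2
  have hcard := pow_mul_one_sub_le_card_injTuples_compl V hn ha hta
  have hpos : (0 : ℝ) < n ^ t * (1 - η / 2) := by
    have : (0 : ℝ) < n := Nat.cast_pos.2 hn
    have : 0 < 1 - η / 2 := by linarith
    positivity
  have hsumW : ∑ j ∈ Vᶜ, x j ^ 2 ≤ n :=
    (sum_le_sum_of_subset_of_nonneg (subset_univ _) fun j _ _ => sq_nonneg _).trans hx
  have hnum : ∑ v ∈ injTuples Vᶜ t, ∏ i : Fin t,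
      (if (i : ℕ) < t₁ then x (v i) ^ 2 else x (v i) ^ 4) ≤ B ^ t₂ * n ^ t :=
    calc _ ≤ ∑ v ∈ injTuples Vᶜ t, B ^ t₂ * ∏ i, x (v i) ^ 2 :=
          sum_le_sum fun v _ => prod_ite_sq_pow_four_le fun i => sq_apply_le_norm_sq x _
      _ = B ^ t₂ * ∑ v ∈ injTuples Vᶜ t, ∏ i, x (v i) ^ 2 := (mul_sum _ _ _).symm
      _ ≤ B ^ t₂ * n ^ t := by
          gcongr
          exact (sum_prod_injTuples_le_pow (fun j => sq_nonneg (x j)) t Vᶜ).trans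
            (pow_le_pow_left₀ (sum_nonneg fun j _ => sq_nonneg _) hsumW t)
  have hη : 1 ≤ (1 + η) * (1 - η / 2) := by nlinarith
  rw [mixedMoment, div_le_iff₀ (hpos.trans_le hcard), pow_mul]
  calc _ ≤ B ^ t₂ * n ^ t := hnum
    _ ≤ B ^ t₂ * n ^ t * ((1 + η) * (1 - η / 2)) := le_mul_of_one_le_right (by positivity) hη
    _ = (1 + η) * B ^ t₂ * (n ^ t * (1 - η / 2)) := by ring
    _ ≤ (1 + η) * B ^ t₂ * (injTuples Vᶜ t).card := by gcongr

lemma one_sub_le_mixedMoment (hn : 0 < n) {x : Fin n → ℝ} (hx : ∑ i, x i ^ 2 = n)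
    (V : Finset (Fin n)) (t : ℕ) {η : ℝ} (ha : ((V.card : ℝ) + t) * ‖x‖ ^ 2 ≤ n)
    (hta : t * (((V.card : ℝ) + t) * ‖x‖ ^ 2) ≤ η * n) :
    1 - η ≤ mixedMoment x V t 0 := by
  have hn' : (0 : ℝ) < n := Nat.cast_pos.2 hn
  set B := ‖x‖ ^ 2
  have hB : ∀ j, x j ^ 2 ≤ B := sq_apply_le_norm_sq x
  have hsumV : ∑ j ∈ V, x j ^ 2 ≤ V.card * B := by
    simpa using sum_le_card_nsmul V _ _ fun j _ => hB j
  have hsplit : ∑ j ∈ Vᶜ, x j ^ 2 + ∑ j ∈ V, x j ^ 2 = n := by rw [sum_compl_add_sum, hx]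
  have hnum : (n : ℝ) ^ t * (1 - η) ≤ ∑ v ∈ injTuples Vᶜ t, ∏ i, x (v i) ^ 2 :=
    calc (n : ℝ) ^ t * (1 - η) ≤ n ^ t * (1 - t * ((V.card + t) * B) / n) := by
          gcongr; rwa [div_le_iff₀ hn']
      _ ≤ (n - (V.card + t) * B) ^ t := pow_mul_one_sub_le_sub_pow hn' (by linarith) t
      _ ≤ _ := pow_le_sum_prod_injTuples (fun j => sq_nonneg (x j)) hB (by positivity) t Vᶜ
          (by linarith) (by linarith)
  have hcard : ((injTuples Vᶜ t).card : ℝ) ≤ n ^ t :=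
    (card_injTuples_le _ t).trans (pow_le_pow_left₀ (Nat.cast_nonneg _)
      (by exact_mod_cast (card_le_univ _).trans_eq (Fintype.card_fin n)) t)
  have hS : mixedMoment x V t 0
      = (∑ v ∈ injTuples Vᶜ t, ∏ i, x (v i) ^ 2) / (injTuples Vᶜ t).card := by
    unfold mixedMoment
    congr 1
    exact sum_congr rfl fun v _ => prod_congr rfl fun i _ => if_pos i.is_lt
  rw [hS]
  calc 1 - η ≤ (∑ v ∈ injTuples Vᶜ t, ∏ i, x (v i) ^ 2) / n ^ t := by
        rw [le_div_iff₀ (pow_pos hn' t)]; linarith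
    _ ≤ _ := by
        rcases (injTuples Vᶜ t).eq_empty_or_nonempty with hF | hF
        · simp [hF]
        · exact div_le_div_of_nonneg_left (sum_nonneg fun v _ => by positivity)
            (Nat.cast_pos.2 hF.card_pos) hcard

/-- `L` stands for `K log n` and `p` for `n ^ (ε / 2)`; the constants in `hLp` make
`t (|V| + t) ≤ p / 2` and `|V| + t ≤ p`. -/
lemma mixedMoment_bounds (hn : 0 < n) {x : Fin n → ℝ} (hx : ∑ i, x i ^ 2 = n)
    (V : Finset (Fin n)) (t₁ t₂ : ℕ) {L p : ℝ} (hLp : 12 * L ^ 2 + 6 * L ≤ p) (hp : 1 ≤ p)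
    (hpn : p ^ 2 ≤ n) (hxp : ‖x‖ ^ 2 * p ^ 2 ≤ n) (hV : (V.card : ℝ) ≤ L)
    (ht₁ : (t₁ : ℝ) ≤ L) (ht₂ : (t₂ : ℝ) ≤ L) :
    mixedMoment x V t₁ t₂ ≤ (1 + p⁻¹) * ‖x‖ ^ (2 * t₂) ∧
      (t₂ = 0 → 1 - p⁻¹ ≤ mixedMoment x V t₁ t₂) := by
  have hp0 : 0 < p := zero_lt_one.trans_le hp
  set B := ‖x‖ ^ 2
  set t : ℝ := ↑(t₁ + t₂) with ht_def
  set a : ℝ := V.card + t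
  have ht : t ≤ 2 * L := by push_cast [ht_def]; linarith
  have ht0 : 0 ≤ t := Nat.cast_nonneg _
  have ha : a ≤ 3 * L := by linarith
  have ha0 : 0 ≤ a := by positivity
  have h3L : 3 * L ≤ p := by nlinarith
  have hta : t * a ≤ p / 2 := by nlinarith [mul_le_mul ht ha ha0 (by linarith)]
  have hap : a ≤ p ^ 2 := by nlinarith
  have hpn' : p ≤ p⁻¹ * n := by rw [le_inv_mul_iff₀ hp0]; nlinarith
  refine ⟨mixedMoment_le hn hx.le V t₁ t₂ (inv_nonneg.2 hp0.le) (inv_le_one_of_one_le₀ hp)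
    (hap.trans hpn) (by linarith), fun ht₂0 => ?_⟩
  have haB : a * B ≤ n := by
    refine le_of_mul_le_mul_right ?_ (pow_pos hp0 2)
    calc a * B * p ^ 2 = a * (B * p ^ 2) := by ring
      _ ≤ p ^ 2 * n := mul_le_mul hap hxp (by positivity) (by positivity)
      _ = n * p ^ 2 := by ring
  have htaB : t * (a * B) ≤ p⁻¹ * n := by
    rw [le_inv_mul_iff₀ hp0]
    nlinarith [mul_le_mul_of_nonneg_left hxp (mul_nonneg ht0 ha0)]
  subst ht₂0
  exact one_sub_le_mixedMoment hn hx V t₁ haB htaB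

end MixedMoment

lemma eventually_mul_log_sq_add_mul_log_le_rpow (a b : ℝ) {r : ℝ} (hr : 0 < r) :
    ∀ᶠ y : ℝ in atTop, a * log y ^ 2 + b * log y ≤ y ^ r := by
  have h := ((isLittleO_log_rpow_rpow_atTop 2 hr).const_mul_left a).add
    ((isLittleO_log_rpow_atTop hr).const_mul_left b)
  filter_upwards [h.bound one_pos, eventually_ge_atTop 0] with y hy hy0
  rw [one_mul, Real.norm_of_nonneg (rpow_nonneg hy0 r), rpow_two] at hy
  exact (le_abs_self _).trans (by simpa only [Real.norm_eq_abs] using hy)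

theorem stmt_6_general (ε K : ℝ) (hε0 : 0 < ε) (hε1 : ε < 1) :
    ∃ c : ℝ, 0 < c ∧ ∃ N : ℕ, ∀ n : ℕ, N ≤ n →
    ∀ (V : Finset (Fin n)) (x : Fin n → ℝ) (t₁ t₂ : ℕ),
      (∑ i, (x i) ^ 2) = (n : ℝ) →
      ‖x‖ ^ 2 ≤ (n : ℝ) ^ ((1 : ℝ) - ε) →
      (V.card : ℝ) ≤ K * Real.log n →
      (t₁ : ℝ) ≤ K * Real.log n →
      (t₂ : ℝ) ≤ K * Real.log n →
      -- the average S_{t₁,t₂,V} over ordered tuples of distinct elements of [n]∖V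
      ∀ F : Finset (Fin (t₁ + t₂) → Fin n),
        F = Finset.univ.filter (fun v => Function.Injective v ∧ ∀ i, v i ∉ V) →
      ∀ S : ℝ,
        S = (∑ v ∈ F, ∏ i : Fin (t₁ + t₂),
              (if (i : ℕ) < t₁ then (x (v i)) ^ 2 else (x (v i)) ^ 4)) / (F.card : ℝ) →
      S ≤ (1 + (n : ℝ) ^ (-c)) * ‖x‖ ^ (2 * t₂) ∧
        (t₂ = 0 → 1 - (n : ℝ) ^ (-c) ≤ S) := by
  refine ⟨ε / 2, half_pos hε0, ?_⟩
  obtain ⟨N, hN⟩ := eventually_atTop.1 <| tendsto_natCast_atTop_atTop.eventually <|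
    eventually_mul_log_sq_add_mul_log_le_rpow (12 * K ^ 2) (6 * K) (half_pos hε0)
  refine ⟨max N 1, fun n hn V x t₁ t₂ hx hxε hV ht₁ ht₂ F hF S hS => ?_⟩
  have hn0 : 0 < n := le_of_max_le_right hn
  have hn1 : (1 : ℝ) ≤ n := by exact_mod_cast hn0
  have hF' : F = injTuples Vᶜ (t₁ + t₂) := by rw [hF]; ext v; simp
  subst hF' hS
  set p := (n : ℝ) ^ (ε / 2)
  have hp2 : p ^ 2 = n ^ ε := by
    rw [← rpow_natCast, ← rpow_mul (Nat.cast_nonneg n)]; ring_nf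
  rw [rpow_neg (Nat.cast_nonneg n)]
  refine mixedMoment_bounds hn0 hx V t₁ t₂ (L := K * log n) ?_ (one_le_rpow hn1 (by positivity))
    ?_ ?_ hV ht₁ ht₂
  · linarith [hN n (le_of_max_le_left hn)]
  · rw [hp2]; simpa using rpow_le_rpow_of_exponent_le hn1 hε1.le
  · calc ‖x‖ ^ 2 * p ^ 2 ≤ n ^ (1 - ε) * n ^ ε := by rw [hp2]; gcongr
      _ = n := by rw [← rpow_add (by positivity)]; simp

/-- bounds on the average of `∏ x_{v_i}² ∏ x_{v_i}⁴` over uniformly random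
ordered tuples of distinct indices avoiding `V`.  Here `‖x‖` is the sup-norm `‖x‖_∞`. -/
theorem stmt_6 (ε K : ℝ) (hε0 : 0 < ε) (hε1 : ε < 1) (hK : 0 < K) :
    ∃ c : ℝ, 0 < c ∧ ∃ N : ℕ, ∀ n : ℕ, N ≤ n →
    ∀ (V : Finset (Fin n)) (x : Fin n → ℝ) (t₁ t₂ : ℕ),
      (∑ i, (x i) ^ 2) = (n : ℝ) →
      ‖x‖ ^ 2 ≤ (n : ℝ) ^ ((1 : ℝ) - ε) →
      (V.card : ℝ) ≤ K * Real.log n →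
      (t₁ : ℝ) ≤ K * Real.log n →
      (t₂ : ℝ) ≤ K * Real.log n →
      -- the average S_{t₁,t₂,V} over ordered tuples of distinct elements of [n]∖V
      ∀ F : Finset (Fin (t₁ + t₂) → Fin n),
        F = Finset.univ.filter (fun v => Function.Injective v ∧ ∀ i, v i ∉ V) →
      ∀ S : ℝ,
        S = (∑ v ∈ F, ∏ i : Fin (t₁ + t₂),
              (if (i : ℕ) < t₁ then (x (v i)) ^ 2 else (x (v i)) ^ 4)) / (F.card : ℝ) →
      S ≤ (1 + (n : ℝ) ^ (-c)) * ‖x‖ ^ (2 * t₂) ∧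
        (t₂ = 0 → 1 - (n : ℝ) ^ (-c) ≤ S) :=
  stmt_6_general ε K hε0 hε1
end

section
/- In the generalized spiked Wigner model Y = λ x xᵀ + W with ‖x‖₂ = √n, ‖x‖_∞² ≤ n^{1−ε} for some constant ε > 0, and λ√n = 1 + δ with δ = Ω(1), and with ℓ = O(log_{1+δ} n), the length-ℓ self-avoiding-walk matrix satisfies E⟨P(Y), x xᵀ⟩ = (1 ± o(1)) · λ^ℓ n^{ℓ+1} as n → ∞. -/
/-!
Each injective walk uses ℓ distinct edges, i.e. ℓ distinct independent, centered entries of `W`, so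
the expectation of its product is the product of the signal entries `λ x_a x_b`. Hence
`E⟨P(Y), x xᵀ⟩ = λ^ℓ ∑_{α injective} ∏_u x_{α u}²`. Summed over all maps `α` this would be
`(∑ x_i²)^{ℓ+1} = n^{ℓ+1}`; the maps with a repeated vertex contribute at most
`(ℓ+1) ℓ ‖x‖_∞² n^ℓ ≤ ℓ² n^{ℓ+1-ε}`, which is `o(n^{ℓ+1})` since `ℓ = O(log n)`.
-/

open MeasureTheory ProbabilityTheory

noncomputable section
open scoped Classical

/-- Noise of the generalized spiked Wigner model: a symmetric random matrix whose
upper-triangular (off-diagonal) entries are independent with mean zero and variance one. -/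
def IsWignerNoise {Ω : Type} [MeasurableSpace Ω] (μ : Measure Ω) (n : ℕ)
    (W : Ω → Fin n → Fin n → ℝ) : Prop :=
  (∀ i j, Measurable fun ω => W ω i j) ∧
  (∀ ω i j, W ω i j = W ω j i) ∧
  iIndepFun
    (fun (p : {q : Fin n × Fin n // q.1 < q.2}) (ω : Ω) => W ω p.1.1 p.1.2) μ ∧
  (∀ i j : Fin n, i < j → ∫ ω, W ω i j ∂μ = 0) ∧
  (∀ i j : Fin n, i < j → ∫ ω, (W ω i j) ^ 2 ∂μ = 1)

/-- The set of length-`ℓ` self-avoiding walks from `i` to `j` in the complete graph on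
`[n]`, encoded as injective functions `Fin (ℓ+1) → Fin n`. -/
def SAWset (n ℓ : ℕ) (i j : Fin n) : Finset (Fin (ℓ + 1) → Fin n) :=
  Finset.univ.filter fun α => Function.Injective α ∧ α 0 = i ∧ α (Fin.last ℓ) = j

/-- The entry `P_{ij}(Y)` of the length-`ℓ` self-avoiding-walk matrix. -/
def sawPoly (n ℓ : ℕ) (Y : Fin n → Fin n → ℝ) (i j : Fin n) : ℝ :=
  ∑ α ∈ SAWset n ℓ i j, ∏ t : Fin ℓ, Y (α t.castSucc) (α t.succ)

open Finset

section WalkSums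

variable {ι : Type*} [Fintype ι] [DecidableEq ι] {c : ι → ℝ} {M : ℝ}

lemma sum_prod_apply_of_apply_eq_le {m : ℕ} (hc0 : ∀ i, 0 ≤ c i) (hM : 0 ≤ M) (hcM : ∀ i, c i ≤ M)
    {s t : Fin (m + 1)} (hst : s ≠ t) :
    ∑ α : Fin (m + 1) → ι with α s = α t, ∏ u, c (α u) ≤ M * (∑ i, c i) ^ m := by
  set F := ({α | α s = α t} : Finset (Fin (m + 1) → ι))
  have hinj : Set.InjOn (· ∘ t.succAbove) (F : Set (Fin (m + 1) → ι)) := by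
    intro α hα α' hα' h
    simp only [F, coe_filter, mem_univ, true_and, Set.mem_ofPred_eq] at hα hα'
    obtain ⟨z, rfl⟩ := Fin.exists_succAbove_eq hst
    funext u
    by_cases hu : u = t
    · rw [hu, ← hα, ← hα']; exact congrFun h z
    · obtain ⟨v, rfl⟩ := Fin.exists_succAbove_eq hu
      exact congrFun h v
  calc ∑ α ∈ F, ∏ u, c (α u)
      = ∑ α ∈ F, c (α t) * ∏ v, c ((α ∘ t.succAbove) v) :=
        sum_congr rfl fun α _ => Fin.prod_univ_succAbove _ t
    _ ≤ ∑ α ∈ F, M * ∏ v, c ((α ∘ t.succAbove) v) := by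
        gcongr with α
        · exact prod_nonneg fun v _ => hc0 _
        · exact hcM _
    _ = M * ∑ β ∈ F.image (· ∘ t.succAbove), ∏ v, c (β v) := by
        rw [mul_sum, sum_image hinj]
    _ ≤ M * ∑ β : Fin m → ι, ∏ v, c (β v) := by
        gcongr
        · exact fun β _ _ => prod_nonneg fun v _ => hc0 _
        · exact subset_univ _
    _ = M * (∑ i, c i) ^ m := by rw [Fintype.sum_pow]

lemma sum_prod_apply_not_injective_le {m : ℕ} (hc0 : ∀ i, 0 ≤ c i) (hM : 0 ≤ M)
    (hcM : ∀ i, c i ≤ M) :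
    ∑ α : Fin (m + 1) → ι with ¬ Function.Injective α, ∏ u, c (α u)
      ≤ (m + 1) * m * M * (∑ i, c i) ^ m := by
  set D := (univ : Finset (Fin (m + 1))).offDiag
  have hprod0 : ∀ α : Fin (m + 1) → ι, 0 ≤ ∏ u, c (α u) := fun α => prod_nonneg fun u _ => hc0 _
  calc ∑ α : Fin (m + 1) → ι with ¬ Function.Injective α, ∏ u, c (α u)
      ≤ ∑ α : Fin (m + 1) → ι with ¬ Function.Injective α,
          ∑ p ∈ D, if α p.1 = α p.2 then ∏ u, c (α u) else 0 := by
        refine sum_le_sum fun α hα => ?_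
        obtain ⟨a, b, hab, hne⟩ : ∃ a b, α a = α b ∧ a ≠ b := by
          simpa [Function.Injective] using hα
        refine (single_le_sum (f := fun p : Fin (m + 1) × Fin (m + 1) =>
          if α p.1 = α p.2 then ∏ u, c (α u) else 0) (fun p _ => ?_) (a := (a, b)) ?_).trans_eq' ?_
        · split_ifs <;> simp [hprod0]
        · simpa [D] using hne
        · simp [hab]
    _ ≤ ∑ α : Fin (m + 1) → ι, ∑ p ∈ D, if α p.1 = α p.2 then ∏ u, c (α u) else 0 :=
        sum_le_sum_of_subset_of_nonneg (subset_univ _) fun α _ _ =>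
          sum_nonneg fun p _ => by split_ifs <;> simp [hprod0]
    _ = ∑ p ∈ D, ∑ α : Fin (m + 1) → ι with α p.1 = α p.2, ∏ u, c (α u) := by
        rw [sum_comm]; simp only [sum_filter]
    _ ≤ ∑ p ∈ D, M * (∑ i, c i) ^ m :=
        sum_le_sum fun p hp => sum_prod_apply_of_apply_eq_le hc0 hM hcM (mem_offDiag.1 hp).2.2
    _ = (m + 1) * m * M * (∑ i, c i) ^ m := by
        rw [sum_const, nsmul_eq_mul, offDiag_card, card_univ, Fintype.card_fin,
          ← Nat.mul_sub_one, Nat.add_sub_cancel]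
        push_cast; ring

lemma abs_sum_prod_apply_injective_sub_pow_le {m : ℕ} (hc0 : ∀ i, 0 ≤ c i) (hM : 0 ≤ M)
    (hcM : ∀ i, c i ≤ M) :
    |∑ α : Fin (m + 1) → ι with Function.Injective α, ∏ u, c (α u) - (∑ i, c i) ^ (m + 1)|
      ≤ (m + 1) * m * M * (∑ i, c i) ^ m := by
  have hsplit := sum_filter_add_sum_filter_not univ Function.Injective
    fun α : Fin (m + 1) → ι => ∏ u, c (α u)
  rw [← Fintype.sum_pow] at hsplit
  have hrest_nonneg : 0 ≤ ∑ α : Fin (m + 1) → ι with ¬ Function.Injective α, ∏ u, c (α u) :=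
    sum_nonneg fun α _ => prod_nonneg fun u _ => hc0 _
  rw [abs_sub_comm, abs_of_nonneg (by linarith)]
  linarith [sum_prod_apply_not_injective_le (m := m) hc0 hM hcM]

end WalkSums

lemma sum_sum_sum_SAWset {β : Type*} [AddCommMonoid β] (n ℓ : ℕ) (g : (Fin (ℓ + 1) → Fin n) → β) :
    ∑ i, ∑ j, ∑ α ∈ SAWset n ℓ i j, g α
      = ∑ α : Fin (ℓ + 1) → Fin n with Function.Injective α, g α := by
  simp only [SAWset, sum_filter]
  conv_lhs => enter [2, i]; rw [sum_comm]
  rw [sum_comm]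
  refine sum_congr rfl fun α _ => ?_
  by_cases h : Function.Injective α <;> simp [h, ite_and]

lemma prod_rankOne_walk {ι : Type*} (lam : ℝ) (x : ι → ℝ) {ℓ : ℕ} (α : Fin (ℓ + 1) → ι) :
    (∏ t : Fin ℓ, lam * x (α t.castSucc) * x (α t.succ)) * (x (α 0) * x (α (Fin.last ℓ)))
      = lam ^ ℓ * ∏ u, x (α u) ^ 2 := by
  rw [prod_pow, sq]
  nth_rw 1 [Fin.prod_univ_castSucc]
  rw [Fin.prod_univ_succ]
  simp only [prod_mul_distrib, prod_const, card_univ, Fintype.card_fin]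
  ring

lemma sum_sawPoly_mul (n ℓ : ℕ) (Y : Fin n → Fin n → ℝ) (x : Fin n → ℝ) :
    ∑ i, ∑ j, sawPoly n ℓ Y i j * (x i * x j)
      = ∑ α : Fin (ℓ + 1) → Fin n with Function.Injective α,
          (∏ t : Fin ℓ, Y (α t.castSucc) (α t.succ)) * (x (α 0) * x (α (Fin.last ℓ))) := by
  rw [← sum_sum_sum_SAWset]
  refine sum_congr rfl fun i _ => sum_congr rfl fun j _ => ?_
  rw [sawPoly, sum_mul]
  refine sum_congr rfl fun α hα => ?_
  obtain ⟨-, rfl, rfl⟩ := (mem_filter.1 hα).2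
  rfl

open Filter Real Asymptotics in
lemma eventually_sq_log_le_rpow {ε : ℝ} (hε : 0 < ε) (C : ℝ) {ε' : ℝ} (hε' : 0 < ε') :
    ∀ᶠ y : ℝ in atTop, (C * log y + 1) ^ 2 ≤ ε' * y ^ ε := by
  have hlog : log =o[atTop] fun y => y ^ (ε / 2) := isLittleO_log_rpow_atTop (by positivity)
  have hlin : (fun y => C * log y + 1) =o[atTop] fun y => y ^ (ε / 2) :=
    (hlog.const_mul_left C).add (isLittleO_const_log_atTop.trans hlog)
  have hsq : (fun y => (C * log y + 1) ^ 2) =o[atTop] fun y : ℝ => y ^ ε := by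
    refine ((hlin.mul hlin).congr_left fun y => (sq _).symm).congr' EventuallyEq.rfl ?_
    filter_upwards [eventually_gt_atTop 0] with y hy
    rw [← rpow_add hy, add_halves]
  filter_upwards [hsq.def hε', eventually_gt_atTop 0] with y hy hpos
  rwa [norm_of_nonneg (sq_nonneg _), norm_of_nonneg (rpow_nonneg hpos.le _)] at hy

open Real in
lemma mul_logb_le_div_log_mul {K b₀ b y : ℝ} (hK : 0 ≤ K) (hb₀ : 1 < b₀) (hb : b₀ ≤ b)
    (hy : 1 ≤ y) : K * logb b y ≤ K / log b₀ * log y := by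
  have hlog_b₀ : 0 < log b₀ := log_pos hb₀
  calc K * logb b y ≤ K * (log y / log b₀) := by
        unfold logb; gcongr; exact log_nonneg hy
    _ = K / log b₀ * log y := by ring

lemma ProbabilityTheory.iIndepFun.integrable_finset_prod {Ω ι : Type*} [MeasurableSpace Ω]
    {μ : Measure Ω} {f : ι → Ω → ℝ} (hind : iIndepFun f μ) (hmeas : ∀ i, Measurable (f i))
    (hint : ∀ i, Integrable (f i) μ) (s : Finset ι) :
    Integrable (fun ω => ∏ i ∈ s, f i ω) μ := by
  have := hind.isProbabilityMeasure
  induction s using Finset.induction_on with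
  | empty => simp
  | insert a s has ih =>
    simp only [prod_insert has]
    have hindep := hind.indepFun_finsetProd_of_notMem hmeas has
    rw [prod_fn] at hindep
    exact hindep.symm.integrable_mul (hint a) ih

lemma IsWignerNoise.integrable {Ω : Type} [MeasurableSpace Ω] {μ : Measure Ω}
    [IsProbabilityMeasure μ] {n : ℕ} {W : Ω → Fin n → Fin n → ℝ} (hW : IsWignerNoise μ n W)
    {i j : Fin n} (hij : i < j) : Integrable (fun ω => W ω i j) μ := by
  have hsq : Integrable (fun ω => W ω i j ^ 2) μ := by
    by_contra h
    have := hW.2.2.2.2 i j hij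
    rw [integral_undef h] at this
    norm_num at this
  exact ((memLp_two_iff_integrable_sq (hW.1 i j).aestronglyMeasurable).2 hsq).integrable
    one_le_two

section WalkEdges

variable {n : ℕ}

def sortedPair (i j : Fin n) (h : i ≠ j) : {q : Fin n × Fin n // q.1 < q.2} :=
  ⟨(min i j, max i j), min_lt_max.2 h⟩

lemma apply_sortedPair {β : Type*} {A : Fin n → Fin n → β} (hA : ∀ i j, A i j = A j i)
    {i j : Fin n} (h : i ≠ j) : A (sortedPair i j h).1.1 (sortedPair i j h).1.2 = A i j := by
  rcases le_total i j with hij | hij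
  · simp [sortedPair, min_eq_left hij, max_eq_right hij]
  · simp [sortedPair, min_eq_right hij, max_eq_left hij, hA]

lemma eq_and_eq_or_eq_and_eq_of_sortedPair_eq {a b c d : Fin n} {hab : a ≠ b} {hcd : c ≠ d}
    (h : sortedPair a b hab = sortedPair c d hcd) : (a = c ∧ b = d) ∨ (a = d ∧ b = c) := by
  have hmin : min a b = min c d := congrArg (fun p => p.1.1) h
  have hmax : max a b = max c d := congrArg (fun p => p.1.2) h
  rcases le_total a b with h1 | h1 <;> rcases le_total c d with h2 | h2 <;>
    simp only [min_eq_left, min_eq_right, max_eq_left, max_eq_right, h1, h2] at hmin hmax <;>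
    simp [hmin, hmax]

variable {ℓ : ℕ} {α : Fin (ℓ + 1) → Fin n}

def walkEdge (hα : Function.Injective α) (t : Fin ℓ) : {q : Fin n × Fin n // q.1 < q.2} :=
  sortedPair (α t.castSucc) (α t.succ) (hα.ne Fin.castSucc_lt_succ.ne)

lemma walkEdge_injective (hα : Function.Injective α) : Function.Injective (walkEdge hα) := by
  intro s t h
  rcases eq_and_eq_or_eq_and_eq_of_sortedPair_eq h with ⟨h1, -⟩ | ⟨h1, h2⟩
  · exact Fin.castSucc_injective _ (hα h1)
  · have h1 := congrArg Fin.val (hα h1)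
    have h2 := congrArg Fin.val (hα h2)
    simp only [Fin.val_castSucc, Fin.val_succ] at h1 h2
    omega

lemma prod_walkEdge {β : Type*} [CommMonoid β] {Y : Fin n → Fin n → β}
    (hY : ∀ i j, Y i j = Y j i) (hα : Function.Injective α) :
    ∏ t : Fin ℓ, Y (α t.castSucc) (α t.succ)
      = ∏ t, Y (walkEdge hα t).1.1 (walkEdge hα t).1.2 :=
  prod_congr rfl fun _ _ => (apply_sortedPair hY _).symm

end WalkEdges

namespace IsWignerNoise

variable {Ω : Type} [MeasurableSpace Ω] {μ : Measure Ω} {n : ℕ} {W : Ω → Fin n → Fin n → ℝ}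

lemma iIndepFun_const_add (hW : IsWignerNoise μ n W) (A : Fin n → Fin n → ℝ) :
    iIndepFun (fun (p : {q : Fin n × Fin n // q.1 < q.2}) ω => A p.1.1 p.1.2 + W ω p.1.1 p.1.2) μ :=
  hW.2.2.1.comp (fun p z => A p.1.1 p.1.2 + z) fun _ => measurable_const_add _

variable {A : Fin n → Fin n → ℝ} {ℓ : ℕ} {α : Fin (ℓ + 1) → Fin n}

lemma prod_walk_eq_prod_walkEdge (hW : IsWignerNoise μ n W) (hA : ∀ i j, A i j = A j i)
    (hα : Function.Injective α) :
    (fun ω => ∏ t : Fin ℓ, (A (α t.castSucc) (α t.succ) + W ω (α t.castSucc) (α t.succ)))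
      = fun ω => ∏ t, (A (walkEdge hα t).1.1 (walkEdge hα t).1.2
          + W ω (walkEdge hα t).1.1 (walkEdge hα t).1.2) :=
  funext fun ω => prod_walkEdge (Y := fun i j => A i j + W ω i j)
    (fun i j => by rw [hA, hW.2.1]) hα

variable [IsProbabilityMeasure μ]

lemma integrable_prod_walk (hW : IsWignerNoise μ n W) (hA : ∀ i j, A i j = A j i)
    (hα : Function.Injective α) :
    Integrable (fun ω => ∏ t : Fin ℓ,
      (A (α t.castSucc) (α t.succ) + W ω (α t.castSucc) (α t.succ))) μ := by
  rw [hW.prod_walk_eq_prod_walkEdge hA hα]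
  exact ((hW.iIndepFun_const_add A).precomp (walkEdge_injective hα)).integrable_finset_prod
    (fun _ => measurable_const.add (hW.1 _ _))
    (fun t => (integrable_const _).add (hW.integrable (walkEdge hα t).2)) _

lemma integral_prod_walk (hW : IsWignerNoise μ n W) (hA : ∀ i j, A i j = A j i)
    (hα : Function.Injective α) :
    ∫ ω, ∏ t : Fin ℓ, (A (α t.castSucc) (α t.succ) + W ω (α t.castSucc) (α t.succ)) ∂μ
      = ∏ t : Fin ℓ, A (α t.castSucc) (α t.succ) := by
  rw [hW.prod_walk_eq_prod_walkEdge hA hα, prod_walkEdge hA hα,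
    ((hW.iIndepFun_const_add A).precomp (walkEdge_injective hα)).integral_fun_prod_eq_prod_integral
      fun _ => (measurable_const.add (hW.1 _ _)).aestronglyMeasurable]
  refine prod_congr rfl fun t _ => ?_
  rw [integral_add (integrable_const _) (hW.integrable (walkEdge hα t).2), integral_const,
    hW.2.2.2.1 _ _ (walkEdge hα t).2]
  simp

lemma integral_sum_sawPoly_rankOne_mul (hW : IsWignerNoise μ n W) (ℓ : ℕ) (lam : ℝ)
    (x : Fin n → ℝ) :
    ∫ ω, ∑ i, ∑ j, sawPoly n ℓ (fun a b => lam * x a * x b + W ω a b) i j * (x i * x j) ∂μ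
      = lam ^ ℓ * ∑ α : Fin (ℓ + 1) → Fin n with Function.Injective α, ∏ u, x (α u) ^ 2 := by
  have hA : ∀ a b, lam * x a * x b = lam * x b * x a := fun a b => by ring
  simp_rw [sum_sawPoly_mul]
  rw [integral_finsetSum _ fun α hα =>
      (hW.integrable_prod_walk hA (mem_filter.1 hα).2).mul_const _, mul_sum]
  refine sum_congr rfl fun α hα => ?_
  rw [integral_mul_const, hW.integral_prod_walk hA (mem_filter.1 hα).2, prod_rankOne_walk]

end IsWignerNoise

/-- `E⟨P(Y), x xᵀ⟩ = (1 ± o(1)) λ^ℓ n^{ℓ+1}` in the generalized spiked Wigner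
model, uniformly over all instances with `λ√n = 1 + δ ≥ 1 + δ₀` and `ℓ ≤ K log_{1+δ} n`. -/
theorem stmt_7 (ε δ₀ K : ℝ) (hε : 0 < ε) (hδ₀ : 0 < δ₀) (hK : 0 < K) :
    ∀ ε' : ℝ, 0 < ε' → ∃ N : ℕ, ∀ n : ℕ, N ≤ n →
    ∀ (x : Fin n → ℝ) (lam δ : ℝ) (ℓ : ℕ),
      (∑ i, (x i) ^ 2) = (n : ℝ) →
      ‖x‖ ^ 2 ≤ (n : ℝ) ^ ((1 : ℝ) - ε) →
      lam * Real.sqrt n = 1 + δ → δ₀ ≤ δ →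
      (ℓ : ℝ) ≤ K * Real.logb (1 + δ) n →
    ∀ (Ω : Type) (_ : MeasurableSpace Ω) (μ : Measure Ω), IsProbabilityMeasure μ →
    ∀ W : Ω → Fin n → Fin n → ℝ, IsWignerNoise μ n W →
      |(∫ ω, ∑ i, ∑ j,
          sawPoly n ℓ (fun a b => lam * x a * x b + W ω a b) i j * (x i * x j) ∂μ) -
            lam ^ ℓ * (n : ℝ) ^ (ℓ + 1)| ≤
        ε' * (lam ^ ℓ * (n : ℝ) ^ (ℓ + 1)) := by
  intro ε' hε'
  set C := K / Real.log (1 + δ₀)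
  obtain ⟨N, hN⟩ := Filter.eventually_atTop.1
    ((tendsto_natCast_atTop_atTop.eventually (eventually_sq_log_le_rpow hε C hε')).and
      (Filter.eventually_ge_atTop 1))
  refine ⟨N, fun n hn x lam δ ℓ hx2 hxinf hlam hδ hℓ Ω _ μ _ W hW => ?_⟩
  obtain ⟨hlog, hn1⟩ := hN n hn
  have hn0 : (0 : ℝ) < n := by exact_mod_cast hn1
  have hlam0 : 0 ≤ lam :=
    (pos_of_mul_pos_left (by linarith : 0 < lam * Real.sqrt n) (Real.sqrt_nonneg _)).le
  have hxM : ∀ i, x i ^ 2 ≤ (n : ℝ) ^ (1 - ε) := fun i =>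
    (sq_abs (x i) ▸ pow_le_pow_left₀ (abs_nonneg _) (norm_le_pi_norm x i) 2).trans hxinf
  have hℓC : (ℓ : ℝ) ≤ C * Real.log n := hℓ.trans
    (mul_logb_le_div_log_mul hK.le (by linarith) (by linarith) (by exact_mod_cast hn1))
  have hcomb := abs_sum_prod_apply_injective_sub_pow_le (m := ℓ) (fun i => sq_nonneg (x i))
    (Real.rpow_nonneg hn0.le _) hxM
  rw [hx2] at hcomb
  rw [hW.integral_sum_sawPoly_rankOne_mul, ← mul_sub, abs_mul, abs_of_nonneg (pow_nonneg hlam0 _),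
    mul_left_comm]
  refine mul_le_mul_of_nonneg_left (hcomb.trans ?_) (pow_nonneg hlam0 _)
  calc ((ℓ : ℝ) + 1) * ℓ * (n : ℝ) ^ (1 - ε) * (n : ℝ) ^ ℓ
      ≤ (C * Real.log n + 1) ^ 2 * (n : ℝ) ^ (1 - ε) * (n : ℝ) ^ ℓ := by gcongr; nlinarith
    _ ≤ ε' * (n : ℝ) ^ ε * (n : ℝ) ^ (1 - ε) * (n : ℝ) ^ ℓ := by gcongr
    _ = ε' * (n : ℝ) ^ (ℓ + 1) := by
        rw [mul_assoc ε', ← Real.rpow_add hn0, add_sub_cancel, Real.rpow_one]; ring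

end
end

section
/- Let α = (α₀, α₁, …, α_ℓ) and β = (β₀, β₁, …, β_ℓ) be two length-ℓ self-avoiding walks in the complete graph on [n] with α₀ = β₀ = i and α_ℓ = β_ℓ = j. Let k be the number of edges shared by α and β, let r be the number of vertices shared by α and β other than i and j, let s be the number of shared vertices other than i and j that are not incident to any shared edge, and let p be the number of connected components of the graph α∩β (the graph whose edge set consists of the shared edges) that contain neither i nor j. Then: if α ≠ β, p ≤ r − s − k; and if α = β, then p = s = 0 and r = k − 1. -/
set_option maxHeartbeats 1000000

noncomputable section
open scoped Classical

/-- The edge set of a walk `α : Fin (ℓ+1) → Fin n`, as unordered pairs. -/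
def walkEdges {n : ℕ} (ℓ : ℕ) (α : Fin (ℓ + 1) → Fin n) : Finset (Sym2 (Fin n)) :=
  Finset.image (fun t : Fin ℓ => s(α t.castSucc, α t.succ)) Finset.univ

/-- The vertex set of a walk. -/
def walkVerts {n : ℕ} (ℓ : ℕ) (α : Fin (ℓ + 1) → Fin n) : Finset (Fin n) :=
  Finset.image α Finset.univ

lemma mem_walkEdges {n ℓ : ℕ} {α : Fin (ℓ + 1) → Fin n} {e : Sym2 (Fin n)} :
    e ∈ walkEdges ℓ α ↔ ∃ t : Fin ℓ, e = s(α t.castSucc, α t.succ) := by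
  simp [walkEdges, eq_comm]

lemma mem_walkVerts {n ℓ : ℕ} {α : Fin (ℓ + 1) → Fin n} {v : Fin n} :
    v ∈ walkVerts ℓ α ↔ ∃ t, α t = v := by
  simp [walkVerts]

lemma walkEdges_injective {n ℓ : ℕ} {α : Fin (ℓ + 1) → Fin n} (hα : Function.Injective α) :
    Function.Injective (fun t : Fin ℓ => s(α t.castSucc, α t.succ)) := by
  intro a b hab
  simp only [Sym2.eq, Sym2.rel_iff', Prod.mk.injEq, Prod.swap_prod_mk] at hab
  rcases hab with ⟨h1, h2⟩ | ⟨h1, h2⟩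
  · exact Fin.castSucc_injective ℓ (hα h1)
  · have h1' : a.val = b.val + 1 := congrArg Fin.val (hα h1)
    have h2' : a.val + 1 = b.val := congrArg Fin.val (hα h2)
    omega

lemma card_walkEdges {n ℓ : ℕ} {α : Fin (ℓ + 1) → Fin n} (hα : Function.Injective α) :
    (walkEdges ℓ α).card = ℓ := by
  rw [walkEdges, Finset.card_image_of_injective _ (walkEdges_injective hα), Finset.card_univ,
    Fintype.card_fin]

lemma card_walkVerts {n ℓ : ℕ} {α : Fin (ℓ + 1) → Fin n} (hα : Function.Injective α) :
    (walkVerts ℓ α).card = ℓ + 1 := by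
  rw [walkVerts, Finset.card_image_of_injective _ hα, Finset.card_univ, Fintype.card_fin]

lemma mem_walkVerts_of_mem_edge {n ℓ : ℕ} {α : Fin (ℓ + 1) → Fin n} {e : Sym2 (Fin n)}
    (he : e ∈ walkEdges ℓ α) {v : Fin n} (hv : v ∈ e) : v ∈ walkVerts ℓ α := by
  rcases mem_walkEdges.1 he with ⟨t, rfl⟩
  rcases Sym2.mem_iff.1 hv with rfl | rfl
  · exact mem_walkVerts.2 ⟨_, rfl⟩
  · exact mem_walkVerts.2 ⟨_, rfl⟩

/-- a walk is determined by its starting point and edge set -/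
lemma walk_eq_of_edges_eq {n ℓ : ℕ} {α β : Fin (ℓ + 1) → Fin n}
    (hα : Function.Injective α) (hβ : Function.Injective β) (h0 : α 0 = β 0)
    (hE : walkEdges ℓ α = walkEdges ℓ β) : α = β := by
  have key : ∀ m : ℕ, ∀ hm : m < ℓ + 1, α ⟨m, hm⟩ = β ⟨m, hm⟩ := by
    intro m
    induction m using Nat.strong_induction_on with
    | _ m ih =>
      intro hm
      match m, hm with
      | 0, hm => exact h0
      | (m' + 1), hm =>
        have hm' : m' < ℓ := by omega
        have hedge : s(β (Fin.castSucc ⟨m', hm'⟩), β (Fin.succ ⟨m', hm'⟩)) ∈ walkEdges ℓ α := by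
          rw [hE]; exact mem_walkEdges.2 ⟨⟨m', hm'⟩, rfl⟩
        rcases mem_walkEdges.1 hedge with ⟨u, hu⟩
        have hβm' : β (Fin.castSucc ⟨m', hm'⟩) = α ⟨m', by omega⟩ := by
          have h := (ih m' (by omega) (by omega)).symm
          have : (Fin.castSucc ⟨m', hm'⟩ : Fin (ℓ+1)) = ⟨m', by omega⟩ := Fin.ext rfl
          rw [this]; exact h
        simp only [Sym2.eq, Sym2.rel_iff', Prod.mk.injEq, Prod.swap_prod_mk] at hu
        rcases hu with ⟨h1, h2⟩ | ⟨h1, h2⟩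
        · have hu' : (u.castSucc : Fin (ℓ+1)) = ⟨m', by omega⟩ := hα (by rw [← h1, hβm'])
          have huv : u.val = m' := congrArg Fin.val hu'
          have hsv : (u.succ : Fin (ℓ+1)) = ⟨m' + 1, hm⟩ := Fin.ext (by simp [huv])
          have h3 : (Fin.succ ⟨m', hm'⟩ : Fin (ℓ+1)) = ⟨m' + 1, hm⟩ := Fin.ext rfl
          rw [← h3, h2, hsv, h3]
        · have hu' : (u.succ : Fin (ℓ+1)) = ⟨m', by omega⟩ := hα (by rw [← h1, hβm'])
          have huv : u.val + 1 = m' := congrArg Fin.val hu'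
          have hαu : α u.castSucc = β ⟨u.val, by omega⟩ := by
            have h := ih u.val (by omega) (by omega)
            have hc : (u.castSucc : Fin (ℓ+1)) = ⟨u.val, by omega⟩ := Fin.ext rfl
            rw [hc]; exact h
          have hbb := h2.trans hαu
          have := congrArg Fin.val (hβ hbb)
          simp at this; omega
  funext t
  have := key t.val t.isLt
  simpa using this

lemma reachable_of_all_edges {n ℓ : ℕ} {α : Fin (ℓ + 1) → Fin n} {E : Finset (Sym2 (Fin n))}
    (hall : ∀ t : Fin ℓ, s(α t.castSucc, α t.succ) ∈ E) (hα : Function.Injective α)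
    (t : Fin (ℓ + 1)) :
    (SimpleGraph.fromEdgeSet (E : Set (Sym2 (Fin n)))).Reachable (α 0) (α t) := by
  set G := SimpleGraph.fromEdgeSet (E : Set (Sym2 (Fin n)))
  have key : ∀ m : ℕ, ∀ hm : m < ℓ + 1, G.Reachable (α 0) (α ⟨m, hm⟩) := by
    intro m
    induction m with
    | zero => intro hm; exact SimpleGraph.Reachable.refl _
    | succ m' ihm =>
      intro hm
      have hm' : m' < ℓ := by omega
      have hadj : G.Adj (α (Fin.castSucc ⟨m', hm'⟩)) (α (Fin.succ ⟨m', hm'⟩)) := by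
        rw [SimpleGraph.fromEdgeSet_adj]
        refine ⟨by exact_mod_cast hall ⟨m', hm'⟩, fun h => ?_⟩
        have := congrArg Fin.val (hα h)
        simp at this
      have h1 : (Fin.castSucc ⟨m', hm'⟩ : Fin (ℓ+1)) = ⟨m', by omega⟩ := Fin.ext rfl
      have h2 : (Fin.succ ⟨m', hm'⟩ : Fin (ℓ+1)) = ⟨m' + 1, hm⟩ := Fin.ext rfl
      rw [h1, h2] at hadj
      exact (ihm (by omega)).trans hadj.reachable
  have := key t.val t.isLt
  simpa using this

lemma not_reachable_of_missing {n ℓ : ℕ} {α : Fin (ℓ + 1) → Fin n} {E : Finset (Sym2 (Fin n))}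
    (hEα : ∀ e ∈ E, e ∈ walkEdges ℓ α) (hα : Function.Injective α)
    (t₀ : Fin ℓ) (hmiss : s(α t₀.castSucc, α t₀.succ) ∉ E) :
    ¬ (SimpleGraph.fromEdgeSet (E : Set (Sym2 (Fin n)))).Reachable (α 0) (α (Fin.last ℓ)) := by
  set G := SimpleGraph.fromEdgeSet (E : Set (Sym2 (Fin n))) with hG
  intro hreach
  set A : Set (Fin n) := {v | ∃ m : Fin (ℓ + 1), m.val ≤ t₀.val ∧ α m = v} with hA
  have hclosed : ∀ v w : Fin n, G.Adj v w → w ∈ A → v ∈ A := by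
    intro v w hadj hw
    rw [hG, SimpleGraph.fromEdgeSet_adj] at hadj
    obtain ⟨he, hne⟩ := hadj
    have heE : s(v, w) ∈ E := by exact_mod_cast he
    rcases mem_walkEdges.1 (hEα _ heE) with ⟨t, ht⟩
    have htne : t ≠ t₀ := by rintro rfl; exact hmiss (ht ▸ heE)
    obtain ⟨m, hm, rfl⟩ := hw
    simp only [Sym2.eq, Sym2.rel_iff', Prod.mk.injEq, Prod.swap_prod_mk] at ht
    rcases ht with ⟨h1, h2⟩ | ⟨h1, h2⟩
    · have hmv : m = t.succ := hα h2
      have hmval : m.val = t.val + 1 := by rw [hmv]; simp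
      refine ⟨t.castSucc, ?_, h1.symm⟩
      simp only [Fin.coe_castSucc]; omega
    · have hmv : m = t.castSucc := hα h2
      have hmval : m.val = t.val := by rw [hmv]; simp
      have htv : t.val < t₀.val := by
        rcases Nat.lt_or_ge t.val t₀.val with h | h
        · exact h
        · exfalso; exact htne (Fin.ext (by omega))
      refine ⟨t.succ, ?_, h1.symm⟩
      simp only [Fin.val_succ]; omega
  have hwalkmem : ∀ (v u : Fin n) (w : G.Walk v u), u ∈ A → v ∈ A := by
    intro v u w
    induction w with
    | nil => exact id
    | cons h w ih => exact fun hu => hclosed _ _ h (ih hu)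
  obtain ⟨w⟩ := hreach.symm
  have hlast : α (Fin.last ℓ) ∈ A := hwalkmem _ _ w ⟨0, by simp, rfl⟩
  obtain ⟨m, hm, hma⟩ := hlast
  have := congrArg Fin.val (hα hma)
  simp at this
  omega

/-- for two length-`ℓ` self-avoiding walks `α, β` from `i` to `j`, with
`k` shared edges, `r` shared vertices other than `i,j`, `s` shared vertices other than
`i,j` not incident to shared edges, and `p` connected components of `α ∩ β` containing
neither `i` nor `j`: if `α ≠ β` then `p ≤ r − s − k`, and if `α = β` then `p = s = 0`
and `r = k − 1`. -/
theorem stmt_8 (n ℓ : ℕ) (hℓ : 1 ≤ ℓ) (i j : Fin n)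
    (α β : Fin (ℓ + 1) → Fin n)
    (hα : Function.Injective α) (hα0 : α 0 = i) (hαl : α (Fin.last ℓ) = j)
    (hβ : Function.Injective β) (hβ0 : β 0 = i) (hβl : β (Fin.last ℓ) = j)
    (E : Finset (Sym2 (Fin n))) (hE : E = walkEdges ℓ α ∩ walkEdges ℓ β)
    (G : SimpleGraph (Fin n)) (hG : G = SimpleGraph.fromEdgeSet (E : Set (Sym2 (Fin n))))
    (k r s p : ℕ)
    (hk : k = E.card)
    (hr : r = ((walkVerts ℓ α ∩ walkVerts ℓ β) \ {i, j}).card)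
    (hs : s = (((walkVerts ℓ α ∩ walkVerts ℓ β) \ {i, j}).filter
      fun w => ∀ e ∈ E, w ∉ e).card)
    (hp : p = {Co : G.ConnectedComponent |
      (∃ u w : Fin n, G.Adj u w ∧ G.connectedComponentMk u = Co) ∧
        G.connectedComponentMk i ≠ Co ∧ G.connectedComponentMk j ≠ Co}.ncard) :
    (α ≠ β → (p : ℤ) ≤ (r : ℤ) - s - k) ∧
      (α = β → p = 0 ∧ s = 0 ∧ (r : ℤ) = (k : ℤ) - 1) := by
  constructor
  · intro hne
    have hEα : ∀ e ∈ E, e ∈ walkEdges ℓ α := fun e he => (Finset.mem_inter.1 (hE ▸ he)).1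
    have hEβ : ∀ e ∈ E, e ∈ walkEdges ℓ β := fun e he => (Finset.mem_inter.1 (hE ▸ he)).2
    have hGadj : ∀ v w : Fin n, G.Adj v w ↔ s(v, w) ∈ E ∧ v ≠ w := by
      intro v w
      rw [hG, SimpleGraph.fromEdgeSet_adj, Finset.mem_coe]
    -- i and j are not connected in G
    have hnotreach : ¬ G.Reachable i j := by
      intro hreach
      have hEall : ∀ t : Fin ℓ, s(α t.castSucc, α t.succ) ∈ E := by
        by_contra hmiss
        push_neg at hmiss
        obtain ⟨t₀, ht₀⟩ := hmiss
        have hnr := not_reachable_of_missing hEα hα t₀ ht₀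
        rw [← hG, hα0, hαl] at hnr
        exact hnr hreach
      have hsub : walkEdges ℓ α ⊆ E := by
        intro e he; rcases mem_walkEdges.1 he with ⟨t, rfl⟩; exact hEall t
      have heq : walkEdges ℓ α = walkEdges ℓ β :=
        Finset.eq_of_subset_of_card_le (fun e he => hEβ _ (hsub he))
          (by rw [card_walkEdges hα, card_walkEdges hβ])
      exact hne (walk_eq_of_edges_eq hα hβ (by rw [hα0, hβ0]) heq)
    -- every G-adjacency comes from a shared edge of the walk α
    have hvert : ∀ v w : Fin n, G.Adj v w → ∃ u : Fin ℓ,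
        s(α u.castSucc, α u.succ) ∈ E ∧
        ((v = α u.castSucc ∧ w = α u.succ) ∨ (v = α u.succ ∧ w = α u.castSucc)) := by
      intro v w hadj
      obtain ⟨he, hvw⟩ := (hGadj v w).1 hadj
      rcases mem_walkEdges.1 (hEα _ he) with ⟨u, hu⟩
      refine ⟨u, hu ▸ he, ?_⟩
      simp only [Sym2.eq, Sym2.rel_iff', Prod.mk.injEq, Prod.swap_prod_mk] at hu
      tauto
    have hedge_adj : ∀ u : Fin ℓ, s(α u.castSucc, α u.succ) ∈ E →
        G.Adj (α u.castSucc) (α u.succ) := by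
      intro u hu
      rw [hGadj]
      refine ⟨hu, fun hc => ?_⟩
      have := congrArg Fin.val (hα hc)
      simp at this
    -- the minimal-incident-index function on components
    set I : G.ConnectedComponent → Finset (Fin (ℓ + 1)) := fun C =>
      Finset.univ.filter
        (fun t => G.connectedComponentMk (α t) = C ∧ ∃ w, G.Adj (α t) w) with hI
    have hImem : ∀ C t, t ∈ I C ↔
        G.connectedComponentMk (α t) = C ∧ ∃ w, G.Adj (α t) w := by
      intro C t; rw [hI]; simp
    set f : G.ConnectedComponent → Fin n := fun C =>
      if h : (I C).Nonempty then α ((I C).min' h) else i with hf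
    have hfdef : ∀ C (h : (I C).Nonempty), f C = α ((I C).min' h) := by
      intro C h; rw [hf]; exact dif_pos h
    have hfC : ∀ C (h : (I C).Nonempty), G.connectedComponentMk (f C) = C := by
      intro C h
      rw [hfdef C h]
      exact ((hImem C _).1 (Finset.min'_mem _ h)).1
    have hfadj : ∀ C (h : (I C).Nonempty), ∃ w, G.Adj (f C) w := by
      intro C h
      rw [hfdef C h]
      exact ((hImem C _).1 (Finset.min'_mem _ h)).2
    -- Claim A : f C is never the successor endpoint of a shared edge
    have hA : ∀ C (h : (I C).Nonempty) (u : Fin ℓ),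
        s(α u.castSucc, α u.succ) ∈ E → f C ≠ α u.succ := by
      intro C h u hu hEq
      rw [hfdef C h] at hEq
      have hminEq : (I C).min' h = u.succ := hα hEq
      have hadj := hedge_adj u hu
      have hcs : u.castSucc ∈ I C := by
        rw [hImem]
        constructor
        · rw [SimpleGraph.ConnectedComponent.sound hadj.reachable]
          rw [← hminEq]
          exact ((hImem C _).1 (Finset.min'_mem _ h)).1
        · exact ⟨_, hadj⟩
      have hle := Finset.min'_le _ _ hcs
      rw [hminEq] at hle
      have := (Fin.le_def).1 hle
      simp at this
    -- f C is always a castSucc endpoint of a shared edge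
    have hfCast : ∀ C (h : (I C).Nonempty), ∃ u : Fin ℓ,
        s(α u.castSucc, α u.succ) ∈ E ∧ f C = α u.castSucc := by
      intro C h
      obtain ⟨w, hadj⟩ := hfadj C h
      obtain ⟨u, huE, hcase⟩ := hvert _ _ hadj
      rcases hcase with ⟨h1, h2⟩ | ⟨h1, h2⟩
      · exact ⟨u, huE, h1⟩
      · exact absurd h1 (hA C h u huE)
    have hfj : ∀ C (h : (I C).Nonempty), f C ≠ j := by
      intro C h hEq
      obtain ⟨u, huE, hcast⟩ := hfCast C h
      rw [hcast, ← hαl] at hEq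
      have := congrArg Fin.val (hα hEq)
      simp [Fin.last] at this
      omega
    have hfi : ∀ C (h : (I C).Nonempty), G.connectedComponentMk i ≠ C → f C ≠ i := by
      intro C h hiC hEq
      exact hiC (hEq ▸ hfC C h)
    -- the finsets
    set T : Finset (Fin ℓ) :=
      Finset.univ.filter (fun t => s(α t.castSucc, α t.succ) ∈ E) with hT
    have hET : E = T.image (fun t => s(α t.castSucc, α t.succ)) := by
      ext e
      simp only [Finset.mem_image, hT, Finset.mem_filter, Finset.mem_univ, true_and]
      constructor
      · intro he
        rcases mem_walkEdges.1 (hEα _ he) with ⟨t, rfl⟩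
        exact ⟨t, he, rfl⟩
      · rintro ⟨t, ht, rfl⟩; exact ht
    have hTcard : T.card = k := by
      rw [hk, hET, Finset.card_image_of_injective _ (walkEdges_injective hα)]
    set SE : Finset (Fin n) := T.image (fun t => α t.succ) with hSE
    have hsuccinj : Function.Injective (fun t : Fin ℓ => α t.succ) := by
      intro a b hab; exact Fin.succ_injective _ (hα hab)
    have hSEcard : SE.card = k := by
      rw [hSE, Finset.card_image_of_injective _ hsuccinj, hTcard]
    set Dpos : Finset (Fin n) := ((walkVerts ℓ α ∩ walkVerts ℓ β) \ {i, j}).filter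
      (fun w => ∃ e ∈ E, w ∈ e) with hDpos
    have hrs : s + Dpos.card = r := by
      rw [hs, hr, hDpos]
      rw [← Finset.card_filter_add_card_filter_not
        (p := fun w => ∀ e ∈ E, w ∉ e) (s := (walkVerts ℓ α ∩ walkVerts ℓ β) \ {i, j})]
      congr 1
      congr 1
      apply Finset.filter_congr
      intro x _
      push_neg
      simp
    -- the set of components and its finset
    have hSfin : {Co : G.ConnectedComponent |
        (∃ u w : Fin n, G.Adj u w ∧ G.connectedComponentMk u = Co) ∧
          G.connectedComponentMk i ≠ Co ∧ G.connectedComponentMk j ≠ Co}.Finite :=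
      Set.toFinite _
    set P : Finset G.ConnectedComponent := hSfin.toFinset with hP
    have hpP : p = P.card := by
      rw [hp, hP, Set.ncard_eq_toFinset_card']
      simp
    have hPmem : ∀ C, C ∈ P ↔
        ((∃ u w : Fin n, G.Adj u w ∧ G.connectedComponentMk u = C) ∧
          G.connectedComponentMk i ≠ C ∧ G.connectedComponentMk j ≠ C) := by
      intro C; rw [hP, Set.Finite.mem_toFinset]; exact Iff.rfl
    have hPne : ∀ C ∈ P, (I C).Nonempty := by
      intro C hC
      obtain ⟨⟨u, w, hadj, hcomp⟩, _, _⟩ := (hPmem C).1 hC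
      obtain ⟨u', huE, hcase⟩ := hvert _ _ hadj
      rcases hcase with ⟨h1, _⟩ | ⟨h1, _⟩
      · exact ⟨u'.castSucc, (hImem C _).2 ⟨by rw [← h1, hcomp], w, h1 ▸ hadj⟩⟩
      · exact ⟨u'.succ, (hImem C _).2 ⟨by rw [← h1, hcomp], w, h1 ▸ hadj⟩⟩
    -- main subset/cardinality claim
    have hsubset : ∀ Q : Finset G.ConnectedComponent,
        (∀ C ∈ Q, (I C).Nonempty) → (∀ C ∈ Q, G.connectedComponentMk i ≠ C) →
        ((SE ∪ Q.image f) \ {j} ⊆ Dpos ∧ (SE ∪ Q.image f).card = k + Q.card) := by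
      intro Q hQ1 hQ2
      constructor
      · intro v hv
        rw [Finset.mem_sdiff, Finset.mem_singleton] at hv
        obtain ⟨hvF, hvj⟩ := hv
        rw [Finset.mem_union] at hvF
        have hkey : ∃ e ∈ E, v ∈ e ∧ v ≠ i := by
          rcases hvF with hvSE | hvf
          · rw [hSE, Finset.mem_image] at hvSE
            obtain ⟨t, ht, rfl⟩ := hvSE
            rw [hT, Finset.mem_filter] at ht
            refine ⟨_, ht.2, Sym2.mem_mk_right _ _, fun hEq => ?_⟩
            rw [← hα0] at hEq
            have := congrArg Fin.val (hα hEq)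
            simp at this
          · rw [Finset.mem_image] at hvf
            obtain ⟨C, hC, rfl⟩ := hvf
            obtain ⟨u, huE, hcast⟩ := hfCast C (hQ1 C hC)
            exact ⟨_, huE, hcast ▸ Sym2.mem_mk_left _ _,
              hfi C (hQ1 C hC) (hQ2 C hC)⟩
        obtain ⟨e, heE, hve, hvi⟩ := hkey
        rw [hDpos, Finset.mem_filter]
        refine ⟨?_, e, heE, hve⟩
        rw [Finset.mem_sdiff]
        constructor
        · rw [Finset.mem_inter]
          exact ⟨mem_walkVerts_of_mem_edge (hEα _ heE) hve,
            mem_walkVerts_of_mem_edge (hEβ _ heE) hve⟩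
        · simp only [Finset.mem_insert, Finset.mem_singleton]
          push_neg
          exact ⟨hvi, hvj⟩
      · rw [Finset.card_union_of_disjoint, hSEcard]
        · congr 1
          apply Finset.card_image_of_injOn
          intro C hC C' hC' hEq
          rw [← hfC C (hQ1 C hC), ← hfC C' (hQ1 C' hC'), hEq]
        · rw [Finset.disjoint_left]
          intro v hvSE hvf
          rw [hSE, Finset.mem_image] at hvSE
          obtain ⟨t, ht, htv⟩ := hvSE
          rw [hT, Finset.mem_filter] at ht
          rw [Finset.mem_image] at hvf
          obtain ⟨C, hC, hCv⟩ := hvf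
          exact hA C (hQ1 C hC) t ht.2 (by rw [hCv, ← htv])
    -- conclude
    have hkeycard : k + p ≤ Dpos.card := by
      by_cases hjSE : j ∈ SE
      · -- the component of j
        have hCjI : (I (G.connectedComponentMk j)).Nonempty := by
          rw [hSE, Finset.mem_image] at hjSE
          obtain ⟨t, ht, htj⟩ := hjSE
          rw [hT, Finset.mem_filter] at ht
          refine ⟨t.succ, (hImem _ _).2 ⟨by rw [htj], α t.castSucc, ?_⟩⟩
          rw [hGadj]
          refine ⟨Sym2.eq_swap ▸ ht.2, fun hc => ?_⟩
          have := congrArg Fin.val (hα hc)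
          simp at this
        have hCjni : G.connectedComponentMk i ≠ G.connectedComponentMk j := by
          intro h
          exact hnotreach (SimpleGraph.ConnectedComponent.exact h)
        have hCjP : G.connectedComponentMk j ∉ P := by
          intro h
          exact ((hPmem _).1 h).2.2 rfl
        set Q : Finset G.ConnectedComponent := insert (G.connectedComponentMk j) P with hQ
        have hQ1 : ∀ C ∈ Q, (I C).Nonempty := by
          intro C hC
          rw [hQ, Finset.mem_insert] at hC
          rcases hC with rfl | hC
          · exact hCjI
          · exact hPne C hC
        have hQ2 : ∀ C ∈ Q, G.connectedComponentMk i ≠ C := by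
          intro C hC
          rw [hQ, Finset.mem_insert] at hC
          rcases hC with rfl | hC
          · exact hCjni
          · exact ((hPmem C).1 hC).2.1
        obtain ⟨hsub, hcard⟩ := hsubset Q hQ1 hQ2
        have hQcard : Q.card = p + 1 := by
          rw [hQ, Finset.card_insert_of_notMem hCjP, hpP]
        have hjF : j ∈ SE ∪ Q.image f := Finset.mem_union_left _ hjSE
        have hFj : ((SE ∪ Q.image f) \ {j}).card = k + p := by
          rw [Finset.card_sdiff_of_subset (Finset.singleton_subset_iff.2 hjF),
            Finset.card_singleton, hcard, hQcard]
          omega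
        rw [← hFj]
        exact Finset.card_le_card hsub
      · obtain ⟨hsub, hcard⟩ := hsubset P hPne (fun C hC => ((hPmem C).1 hC).2.1)
        have hjF : j ∉ SE ∪ P.image f := by
          rw [Finset.mem_union]
          rintro (h | h)
          · exact hjSE h
          · rw [Finset.mem_image] at h
            obtain ⟨C, hC, hCv⟩ := h
            exact hfj C (hPne C hC) hCv
        have hFj : (SE ∪ P.image f) \ {j} = SE ∪ P.image f := by
          rw [Finset.sdiff_eq_self_iff_disjoint, Finset.disjoint_singleton_right]
          exact hjF
        rw [hFj] at hsub
        have := Finset.card_le_card hsub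
        rw [hcard, ← hpP] at this
        exact this
    omega
  · -- α = β case
    intro hab
    subst hab
    rw [Finset.inter_self] at hE
    have hEall : ∀ t : Fin ℓ, s(α t.castSucc, α t.succ) ∈ E := by
      intro t; rw [hE]; exact mem_walkEdges.2 ⟨t, rfl⟩
    have hij : i ≠ j := by
      rw [← hα0, ← hαl]
      intro h
      have := congrArg Fin.val (hα h)
      simp [Fin.last] at this
      omega
    have hp0 : p = 0 := by
      rw [hp]
      rw [Set.ncard_eq_zero (Set.toFinite _)]
      ext C
      simp only [Set.mem_setOf_eq, Set.mem_empty_iff_false, iff_false]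
      rintro ⟨⟨u, w, hadj, rfl⟩, hi, hj⟩
      apply hi
      rw [hG, SimpleGraph.fromEdgeSet_adj] at hadj
      obtain ⟨he, hne⟩ := hadj
      have heE : s(u, w) ∈ E := by exact_mod_cast he
      have huα : u ∈ walkVerts ℓ α :=
        mem_walkVerts_of_mem_edge (hE ▸ heE) (Sym2.mem_mk_left _ _)
      obtain ⟨t, rfl⟩ := mem_walkVerts.1 huα
      have := reachable_of_all_edges hEall hα t
      rw [← hG] at this
      rw [← hα0]
      exact SimpleGraph.ConnectedComponent.eq.2 this
    have hs0 : s = 0 := by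
      rw [hs, Finset.card_eq_zero]
      rw [Finset.eq_empty_iff_forall_notMem]
      intro w hw
      rw [Finset.mem_filter] at hw
      obtain ⟨hwD, hwP⟩ := hw
      rw [Finset.mem_sdiff, Finset.inter_self] at hwD
      obtain ⟨hwv, hwij⟩ := hwD
      obtain ⟨t, rfl⟩ := mem_walkVerts.1 hwv
      simp only [Finset.mem_insert, Finset.mem_singleton] at hwij
      push_neg at hwij
      have ht0 : t.val ≠ 0 := by
        intro h; exact hwij.1 (by rw [← hα0]; congr 1; exact Fin.ext h)
      have htl : t.val ≠ ℓ := by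
        intro h; exact hwij.2 (by rw [← hαl]; congr 1; exact Fin.ext h)
      have htlt : t.val - 1 < ℓ := by omega
      have hteq : (Fin.succ ⟨t.val - 1, htlt⟩ : Fin (ℓ+1)) = t := Fin.ext (by simp; omega)
      have hmem : α t ∈ s(α (Fin.castSucc ⟨t.val - 1, htlt⟩), α (Fin.succ ⟨t.val - 1, htlt⟩)) := by
        rw [hteq]; exact Sym2.mem_mk_right _ _
      exact hwP _ (hEall ⟨t.val - 1, htlt⟩) hmem
    refine ⟨hp0, hs0, ?_⟩
    have hkℓ : k = ℓ := by rw [hk, hE, card_walkEdges hα]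
    have hrℓ : r = ℓ - 1 := by
      rw [hr, Finset.inter_self]
      rw [Finset.card_sdiff_of_subset]
      · rw [card_walkVerts hα, Finset.card_insert_of_notMem (by simp [hij]),
          Finset.card_singleton]
        omega
      · intro v hv
        simp only [Finset.mem_insert, Finset.mem_singleton] at hv
        rcases hv with rfl | rfl
        · exact mem_walkVerts.2 ⟨0, hα0⟩
        · exact mem_walkVerts.2 ⟨_, hαl⟩
    rw [hrℓ, hkℓ]
    omega

end
end

section
/- For each n let ℙ_n and ℚ_n be probability distributions on a measurable space, let {χ_α : α ∈ S_n} be a finite family of real-valued functions that is orthonormal in L²(ℚ_n), let μ̂_α = E_{ℙ_n}[χ_α(Y)], and set P_n(Y) = Σ_{α ∈ S_n} μ̂_α χ_α(Y). If Σ_{α ∈ S_n} μ̂_α² → ∞ as n → ∞ and E_{ℙ_n}[P_n(Y)²] = (1 + o(1)) (E_{ℙ_n}[P_n(Y)])², then there exist thresholds t_n such that the tests f_n(Y) = 1{P_n(Y) ≥ t_n} satisfy ℙ_n[f_n(Y) = 1] → 1 and ℚ_n[f_n(Y) = 0] → 1; in particular (1/2)ℙ_n[f_n(Y)=1] + (1/2)ℚ_n[f_n(Y)=0]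 → 1 (strong detection). -/
/-!
Take the threshold `t_n = m_n / 2` with `m_n = ∑ α, μ̂_α²`. Under `ℙ_n` the mean of `P_n` is
exactly `m_n`, so the concentration hypothesis says its variance is `err_n · m_n²`, and Chebyshev
bounds `ℙ_n[P_n < t_n]` by `4 · err_n`. Under `ℚ_n`, orthonormality gives `E[P_n²] = m_n`, so
Markov's inequality for `P_n²` bounds `ℚ_n[P_n ≥ t_n]` by `4 / m_n`.
-/

open MeasureTheory Filter ProbabilityTheory Topology
open scoped Classical

variable {Ω : Type*} [MeasurableSpace Ω] {μ : Measure Ω}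

theorem memLp_two_of_integral_sq_ne_zero {f : Ω → ℝ} (hf : AEStronglyMeasurable f μ)
    (h : ∫ y, f y ^ 2 ∂μ ≠ 0) : MemLp f 2 μ :=
  (memLp_two_iff_integrable_sq hf).2 (Integrable.of_integral_ne_zero h)

theorem integral_sum_integral_mul {ι : Type*} [Fintype ι] (χ : ι → Ω → ℝ) :
    ∫ y, ∑ a, (∫ x, χ a x ∂μ) * χ a y ∂μ = ∑ a, (∫ x, χ a x ∂μ) ^ 2 := by
  have hterm : ∀ a, Integrable (fun y => (∫ x, χ a x ∂μ) * χ a y) μ := fun a => by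
    by_cases h : Integrable (χ a) μ
    · exact h.const_mul _
    · simp [integral_undef h]
  rw [integral_finsetSum _ fun a _ => hterm a]
  simp only [integral_const_mul, sq]

theorem integral_sq_sum_of_orthonormal {ι : Type*} [Fintype ι] {χ : ι → Ω → ℝ}
    (hχ : ∀ a, AEStronglyMeasurable (χ a) μ)
    (horth : ∀ a b, ∫ y, χ a y * χ b y ∂μ = if a = b then 1 else 0) (c : ι → ℝ) :
    ∫ y, (∑ a, c a * χ a y) ^ 2 ∂μ = ∑ a, c a ^ 2 := by
  have hL2 : ∀ a, MemLp (χ a) 2 μ := fun a =>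
    memLp_two_of_integral_sq_ne_zero (hχ a) (by simp [sq, horth a a])
  have hprod : ∀ a b, Integrable (fun y => c a * c b * (χ a y * χ b y)) μ := fun a b =>
    ((hL2 a).integrable_mul (hL2 b)).const_mul _
  calc ∫ y, (∑ a, c a * χ a y) ^ 2 ∂μ
      = ∫ y, ∑ a, ∑ b, c a * c b * (χ a y * χ b y) ∂μ := by
        congr 1 with y
        rw [sq, Finset.sum_mul_sum]
        exact Finset.sum_congr rfl fun a _ => Finset.sum_congr rfl fun b _ => by ring
    _ = ∑ a, ∑ b, c a * c b * ∫ y, χ a y * χ b y ∂μ := by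
        rw [integral_finsetSum _ fun a _ => integrable_finsetSum _ fun b _ => hprod a b]
        refine Finset.sum_congr rfl fun a _ => ?_
        rw [integral_finsetSum _ fun b _ => hprod a b]
        simp only [integral_const_mul]
    _ = ∑ a, c a ^ 2 := by simp [horth, sq]

theorem measureReal_le_le_integral_sq_div_sq [IsFiniteMeasure μ] {f : Ω → ℝ}
    (hf : Integrable (fun y => f y ^ 2) μ) {t : ℝ} (ht : 0 < t) :
    μ.real {y | t ≤ f y} ≤ (∫ y, f y ^ 2 ∂μ) / t ^ 2 := by
  have hsub : {y | t ≤ f y} ⊆ {y | t ^ 2 ≤ f y ^ 2} := fun y hy =>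
    pow_le_pow_left₀ ht.le hy 2
  rw [le_div_iff₀ (by positivity), mul_comm]
  calc t ^ 2 * μ.real {y | t ≤ f y} ≤ t ^ 2 * μ.real {y | t ^ 2 ≤ f y ^ 2} :=
        mul_le_mul_of_nonneg_left (measureReal_mono hsub) (sq_nonneg t)
    _ ≤ ∫ y, f y ^ 2 ∂μ :=
        mul_meas_ge_le_integral_of_nonneg (ae_of_all _ fun y => sq_nonneg _) hf _

theorem measureReal_lt_half_integral_le [IsFiniteMeasure μ] {f : Ω → ℝ} (hf : MemLp f 2 μ)
    (hpos : 0 < μ[f]) : μ.real {y | f y < μ[f] / 2} ≤ 4 * variance f μ / μ[f] ^ 2 := by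
  have hsub : {y | f y < μ[f] / 2} ⊆ {y | μ[f] / 2 ≤ |f y - μ[f]|} := by
    intro y (hy : f y < μ[f] / 2)
    show μ[f] / 2 ≤ |f y - μ[f]|
    rw [abs_sub_comm, abs_of_nonneg (by linarith)]
    linarith
  have hvar_nonneg : 0 ≤ variance f μ / (μ[f] / 2) ^ 2 :=
    div_nonneg (variance_nonneg f μ) (sq_nonneg _)
  calc μ.real {y | f y < μ[f] / 2} ≤ μ.real {y | μ[f] / 2 ≤ |f y - μ[f]|} :=
        measureReal_mono hsub
    _ ≤ variance f μ / (μ[f] / 2) ^ 2 := by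
        rw [measureReal_def, ← ENNReal.toReal_ofReal hvar_nonneg]
        exact ENNReal.toReal_mono ENNReal.ofReal_ne_top
          (meas_ge_le_variance_div_sq hf (half_pos hpos))
    _ = 4 * variance f μ / μ[f] ^ 2 := by field_simp; ring

theorem measureReal_setOf_lt_eq_one_sub [IsProbabilityMeasure μ] {f : Ω → ℝ} (hf : Measurable f)
    {t : ℝ} : μ.real {y | f y < t} = 1 - μ.real {y | t ≤ f y} := by
  rw [← probReal_compl_eq_one_sub (measurableSet_le measurable_const hf)]
  simp only [Set.compl_ofPred, not_le]

section SecondMomentMethod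

variable {E : ℕ → Type*} [∀ n, MeasurableSpace (E n)] {f : ∀ n, E n → ℝ} {m : ℕ → ℝ}

theorem tendsto_measureReal_lt_half_of_integral_sq_eq (μ : ∀ n, Measure (E n))
    [∀ n, IsProbabilityMeasure (μ n)] (hf : ∀ n, Measurable (f n)) (hm : Tendsto m atTop atTop)
    (hsq : ∀ n, ∫ y, f n y ^ 2 ∂μ n = m n) :
    Tendsto (fun n => (μ n).real {y | f n y < m n / 2}) atTop (𝓝 1) := by
  have hbound : ∀ᶠ n in atTop, (μ n).real {y | m n / 2 ≤ f n y} ≤ 4 / m n := by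
    filter_upwards [hm.eventually_gt_atTop 0] with n hn
    have hint : Integrable (fun y => f n y ^ 2) (μ n) :=
      Integrable.of_integral_ne_zero (by rw [hsq]; exact hn.ne')
    calc (μ n).real {y | m n / 2 ≤ f n y} ≤ (∫ y, f n y ^ 2 ∂μ n) / (m n / 2) ^ 2 :=
          measureReal_le_le_integral_sq_div_sq hint (half_pos hn)
      _ = 4 / m n := by rw [hsq]; field_simp; ring
  have htail : Tendsto (fun n => (μ n).real {y | m n / 2 ≤ f n y}) atTop (𝓝 0) :=
    tendsto_of_tendsto_of_tendsto_of_le_of_le' tendsto_const_nhds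
      (tendsto_const_nhds.div_atTop hm) (Eventually.of_forall fun n => measureReal_nonneg) hbound
  have := htail.const_sub 1
  rw [sub_zero] at this
  exact this.congr fun n => (measureReal_setOf_lt_eq_one_sub (hf n)).symm

theorem tendsto_measureReal_half_le_of_integral_sq_eq_mul (μ : ∀ n, Measure (E n))
    [∀ n, IsProbabilityMeasure (μ n)] (hf : ∀ n, Measurable (f n)) (hm : Tendsto m atTop atTop)
    {err : ℕ → ℝ} (herr : Tendsto err atTop (𝓝 0)) (hmean : ∀ n, ∫ y, f n y ∂μ n = m n)
    (hsq : ∀ n, ∫ y, f n y ^ 2 ∂μ n = (1 + err n) * m n ^ 2) :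
    Tendsto (fun n => (μ n).real {y | m n / 2 ≤ f n y}) atTop (𝓝 1) := by
  have hbound : ∀ᶠ n in atTop, (μ n).real {y | f n y < m n / 2} ≤ 4 * err n := by
    filter_upwards [hm.eventually_gt_atTop 0, herr.eventually (lt_mem_nhds neg_one_lt_zero)]
      with n hm_pos herr_gt
    have hL2 : MemLp (f n) 2 (μ n) := by
      refine memLp_two_of_integral_sq_ne_zero (hf n).aestronglyMeasurable ?_
      rw [hsq]
      exact (mul_pos (by linarith) (by positivity)).ne'
    have hvar : variance (f n) (μ n) = err n * m n ^ 2 := by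
      rw [variance_eq_sub hL2]
      simp only [Pi.pow_apply]
      rw [hsq, hmean]
      ring
    calc (μ n).real {y | f n y < m n / 2} ≤ 4 * variance (f n) (μ n) / m n ^ 2 := by
          simpa only [hmean] using measureReal_lt_half_integral_le hL2 (hmean n ▸ hm_pos)
      _ = 4 * err n := by rw [hvar]; field_simp
  have htail : Tendsto (fun n => (μ n).real {y | f n y < m n / 2}) atTop (𝓝 0) := by
    have h4err := herr.const_mul 4
    rw [mul_zero] at h4err
    exact tendsto_of_tendsto_of_tendsto_of_le_of_le' tendsto_const_nhds h4err
      (Eventually.of_forall fun n => measureReal_nonneg) hbound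
  have := htail.const_sub 1
  rw [sub_zero] at this
  exact this.congr fun n => by rw [measureReal_setOf_lt_eq_one_sub (hf n)]; ring

end SecondMomentMethod

/-- low-degree polynomial thresholding gives strong detection.  If the family
`{χ_α}` is orthonormal under `ℚ_n`, the low-degree likelihood-ratio norm `Σ μ̂_α²` diverges,
and `P_n` concentrates under `ℙ_n` (second moment `(1+o(1))` times squared first moment),
then thresholding `P_n` distinguishes `ℙ_n` from `ℚ_n` with probability `1 − o(1)`. -/
theorem stmt_14
    (E : ℕ → Type) [∀ n, MeasurableSpace (E n)]
    (P Q : ∀ n, MeasureTheory.Measure (E n))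
    (hP : ∀ n, IsProbabilityMeasure (P n)) (hQ : ∀ n, IsProbabilityMeasure (Q n))
    (ι : ℕ → Type) [∀ n, Fintype (ι n)]
    (χ : ∀ n, ι n → E n → ℝ)
    (hmeas : ∀ n a, Measurable (χ n a))
    -- orthonormality in L²(ℚ_n)
    (horth : ∀ n (a b : ι n),
      (∫ y, χ n a y * χ n b y ∂Q n) = if a = b then (1 : ℝ) else 0)
    -- the Fourier coefficients of the likelihood ratio and the polynomial P_n
    (μhat : ∀ n, ι n → ℝ)
    (hμhat : ∀ n a, μhat n a = ∫ y, χ n a y ∂P n)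
    (Ppoly : ∀ n, E n → ℝ)
    (hPpoly : ∀ n y, Ppoly n y = ∑ a : ι n, μhat n a * χ n a y)
    -- diverging low-degree likelihood ratio
    (hdiv : Tendsto (fun n => ∑ a : ι n, (μhat n a) ^ 2) atTop atTop)
    -- concentration: E_ℙ[P²] = (1 + o(1)) (E_ℙ[P])²
    (err : ℕ → ℝ) (herr : Tendsto err atTop (nhds 0))
    (hconc : ∀ n, (∫ y, (Ppoly n y) ^ 2 ∂P n) = (1 + err n) * (∫ y, Ppoly n y ∂P n) ^ 2) :
    ∃ t : ℕ → ℝ,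
      Tendsto (fun n => ((P n) {y | t n ≤ Ppoly n y}).toReal) atTop (nhds 1) ∧
      Tendsto (fun n => ((Q n) {y | Ppoly n y < t n}).toReal) atTop (nhds 1) ∧
      Tendsto (fun n =>
          (1 : ℝ) / 2 * ((P n) {y | t n ≤ Ppoly n y}).toReal +
            (1 : ℝ) / 2 * ((Q n) {y | Ppoly n y < t n}).toReal) atTop (nhds 1) := by
  set m : ℕ → ℝ := fun n => ∑ a : ι n, μhat n a ^ 2
  have hPpoly_meas : ∀ n, Measurable (Ppoly n) := fun n => by
    rw [funext (hPpoly n)]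
    fun_prop
  have hmean : ∀ n, ∫ y, Ppoly n y ∂P n = m n := fun n => by
    simp only [hPpoly, m, hμhat]
    exact integral_sum_integral_mul (χ n)
  have hsqQ : ∀ n, ∫ y, Ppoly n y ^ 2 ∂Q n = m n := fun n => by
    simp only [hPpoly]
    exact integral_sq_sum_of_orthonormal (fun a => (hmeas n a).aestronglyMeasurable) (horth n) _
  have hP1 := tendsto_measureReal_half_le_of_integral_sq_eq_mul P hPpoly_meas hdiv herr hmean
    fun n => by rw [hconc, hmean]
  have hQ1 := tendsto_measureReal_lt_half_of_integral_sq_eq Q hPpoly_meas hdiv hsqQ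
  refine ⟨fun n => m n / 2, hP1, hQ1, ?_⟩
  convert (hP1.const_mul (1 / 2)).add (hQ1.const_mul (1 / 2)) using 2 <;>
    norm_num [measureReal_def]
end

section
/- Let α, β ∈ S_{ℓ,v}. Let r be the number of vertices shared by α and β, let k be the number of hyperedges shared by α and β, and let s be the number of shared vertices having degree 0 or 1 in the hypergraph α∩β (whose hyperedge set consists of the shared hyperedges). Then 2r − s ≥ 3k. Moreover, if 2r = 3k then either α and β are disjoint (k = r = 0), or, writing k_t for the number of shared hyperedges between levels t and t+1 of α (indices cyclic), one has k_t ≥ 1 for every level t ∈ {0, …, 2ℓ−1} and all the k_t are equal to the same value. -/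
noncomputable section
open scoped Classical

/-- Generating data for a hypergraph in `S_{ℓ,v}`: `2ℓ` levels of pairwise distinct
vertices (level `2t` is the range of `a t`, with `v` vertices; level `2t+1` is the range
of `b t`, with `2v` vertices), and for every pair of cyclically consecutive levels a
perfect matching of `v` directed hyperedges, each consisting of one even-level vertex and
an (ordered) pair of odd-level vertices, encoded by the equivalences `e t` (for the gap
between levels `2t` and `2t+1`) and `f t` (for the gap between levels `2t+1` and
`2t+2`, cyclically). -/
structure HData (n ℓ v : ℕ) where
  a : Fin ℓ → Fin v → Fin n
  b : Fin ℓ → Fin (2 * v) → Fin n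
  e : Fin ℓ → (Fin v × Fin 2) ≃ Fin (2 * v)
  f : Fin ℓ → (Fin v × Fin 2) ≃ Fin (2 * v)
  inj : Function.Injective fun p : (Fin ℓ × Fin v) ⊕ (Fin ℓ × Fin (2 * v)) =>
    Sum.elim (fun q : Fin ℓ × Fin v => a q.1 q.2) (fun q : Fin ℓ × Fin (2 * v) => b q.1 q.2) p

/-- The hyperedges of the gap between levels `2t` and `2t+1`, directed from the even
level to the odd level: triples `(u, a, b)`. -/
def evenGap {n ℓ v : ℕ} (D : HData n ℓ v) (t : Fin ℓ) : Finset (Fin n × Fin n × Fin n) :=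
  Finset.image
    (fun k : Fin v => (D.a t k, D.b t (D.e t (k, 0)), D.b t (D.e t (k, 1)))) Finset.univ

/-- The hyperedges of the gap between levels `2t+1` and `2t+2` (cyclically): directed from
the odd level to the even level (triples `(a, b, u)`), except for the wrap-around gap
between levels `2ℓ−1` and `0`, which is directed from level `0` to level `2ℓ−1`
(triples `(u, a, b)`). -/
def oddGap {n ℓ v : ℕ} (D : HData n ℓ v) (t : Fin ℓ) : Finset (Fin n × Fin n × Fin n) :=
  Finset.image
    (fun k : Fin v =>
      if h : (t : ℕ) + 1 < ℓ then
        (D.b t (D.f t (k, 0)), D.b t (D.f t (k, 1)), D.a ⟨(t : ℕ) + 1, h⟩ k)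
      else
        (D.a ⟨0, t.pos⟩ k, D.b t (D.f t (k, 0)), D.b t (D.f t (k, 1)))) Finset.univ

/-- The directed 3-uniform hypergraph (set of ordered triples) generated by the data `D`. -/
def edgesOf {n ℓ v : ℕ} (D : HData n ℓ v) : Finset (Fin n × Fin n × Fin n) :=
  Finset.univ.biUnion fun t : Fin ℓ => evenGap D t ∪ oddGap D t

/-- `S_{ℓ,v}`: the family of all hypergraphs produced by some generating data. -/
def SFam (n ℓ v : ℕ) : Finset (Finset (Fin n × Fin n × Fin n)) :=
  Finset.univ.filter fun E => ∃ D : HData n ℓ v, E = edgesOf D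

/-- The vertex set of a set of ordered triples. -/
def vertsOf {n : ℕ} (E : Finset (Fin n × Fin n × Fin n)) : Finset (Fin n) :=
  E.biUnion fun e => {e.1, e.2.1, e.2.2}

/-- The polynomial `χ_α(Y) = ∏_{(i,j,k) ∈ α} Y_{ijk}`. -/
def hchi {n : ℕ} (Y : Fin n → Fin n → Fin n → ℝ) (E : Finset (Fin n × Fin n × Fin n)) : ℝ :=
  ∏ e ∈ E, Y e.1 e.2.1 e.2.2


/-- The degree of a vertex `w` in a set of triples. -/
def degOf {n : ℕ} (E : Finset (Fin n × Fin n × Fin n)) (w : Fin n) : ℕ :=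
  (E.filter fun e => w = e.1 ∨ w = e.2.1 ∨ w = e.2.2).card

namespace Stmt16Aux

variable {n ℓ v : ℕ}

lemma fin2 (i : Fin 2) : i = 0 ∨ i = 1 := by revert i; decide

/-- The even-gap edge generator. -/
def Eeven (D : HData n ℓ v) (t : Fin ℓ) (m : Fin v) : Fin n × Fin n × Fin n :=
  (D.a t m, D.b t (D.e t (m, 0)), D.b t (D.e t (m, 1)))

/-- The odd-gap edge generator. -/
def Eodd (D : HData n ℓ v) (t : Fin ℓ) (m : Fin v) : Fin n × Fin n × Fin n :=
  if h : (t : ℕ) + 1 < ℓ then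
    (D.b t (D.f t (m, 0)), D.b t (D.f t (m, 1)), D.a ⟨(t : ℕ) + 1, h⟩ m)
  else
    (D.a ⟨0, t.pos⟩ m, D.b t (D.f t (m, 0)), D.b t (D.f t (m, 1)))

lemma evenGap_eq (D : HData n ℓ v) (t : Fin ℓ) :
    evenGap D t = Finset.image (Eeven D t) Finset.univ := rfl

lemma oddGap_eq (D : HData n ℓ v) (t : Fin ℓ) :
    oddGap D t = Finset.image (Eodd D t) Finset.univ := rfl

lemma a_inj (D : HData n ℓ v) {t t' : Fin ℓ} {m m' : Fin v}
    (h : D.a t m = D.a t' m') : t = t' ∧ m = m' := by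
  have := D.inj (a₁ := Sum.inl (t, m)) (a₂ := Sum.inl (t', m')) h
  simpa [Prod.ext_iff] using this

lemma b_inj (D : HData n ℓ v) {t t' : Fin ℓ} {j j' : Fin (2 * v)}
    (h : D.b t j = D.b t' j') : t = t' ∧ j = j' := by
  have := D.inj (a₁ := Sum.inr (t, j)) (a₂ := Sum.inr (t', j')) h
  simpa [Prod.ext_iff] using this

lemma ab_ne (D : HData n ℓ v) (t t' : Fin ℓ) (m : Fin v) (j : Fin (2 * v)) :
    D.a t m ≠ D.b t' j := by
  intro h
  have := D.inj (a₁ := Sum.inl (t, m)) (a₂ := Sum.inr (t', j)) h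
  simp at this

lemma Eeven_mem (D : HData n ℓ v) (t : Fin ℓ) (m : Fin v) : Eeven D t m ∈ edgesOf D := by
  refine Finset.mem_biUnion.2 ⟨t, Finset.mem_univ t, Finset.mem_union_left _ ?_⟩
  rw [evenGap_eq]; exact Finset.mem_image_of_mem _ (Finset.mem_univ m)

lemma Eodd_mem (D : HData n ℓ v) (t : Fin ℓ) (m : Fin v) : Eodd D t m ∈ edgesOf D := by
  refine Finset.mem_biUnion.2 ⟨t, Finset.mem_univ t, Finset.mem_union_right _ ?_⟩
  rw [oddGap_eq]; exact Finset.mem_image_of_mem _ (Finset.mem_univ m)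

lemma mem_edges_iff (D : HData n ℓ v) (z : Fin n × Fin n × Fin n) :
    z ∈ edgesOf D ↔ ∃ t m, z = Eeven D t m ∨ z = Eodd D t m := by
  constructor
  · intro hz
    obtain ⟨t, -, ht⟩ := Finset.mem_biUnion.1 hz
    rcases Finset.mem_union.1 ht with h | h
    · rw [evenGap_eq] at h
      obtain ⟨m, -, hm⟩ := Finset.mem_image.1 h
      exact ⟨t, m, Or.inl hm.symm⟩
    · rw [oddGap_eq] at h
      obtain ⟨m, -, hm⟩ := Finset.mem_image.1 h
      exact ⟨t, m, Or.inr hm.symm⟩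
  · rintro ⟨t, m, h | h⟩ <;> subst h
    · exact Eeven_mem D t m
    · exact Eodd_mem D t m

/-- Cyclic predecessor on `Fin ℓ`. -/
def predF {ℓ : ℕ} (t : Fin ℓ) : Fin ℓ :=
  ⟨if (t : ℕ) = 0 then ℓ - 1 else (t : ℕ) - 1, by
    have h1 := t.pos; have h2 := t.isLt; split <;> omega⟩

lemma predF_cond_pos {ℓ : ℕ} (t : Fin ℓ) (h0 : (t : ℕ) ≠ 0) :
    ((predF t : ℕ)) + 1 < ℓ := by
  have h2 := t.isLt; simp only [predF, if_neg h0]; omega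

lemma predF_cond_neg {ℓ : ℕ} (t : Fin ℓ) (h0 : (t : ℕ) = 0) :
    ¬ ((predF t : ℕ)) + 1 < ℓ := by
  have h1 := t.pos; simp only [predF, if_pos h0]; omega

lemma a_on_odd (D : HData n ℓ v) (t : Fin ℓ) (m : Fin v) :
    D.a t m = (Eodd D (predF t) m).1 ∨ D.a t m = (Eodd D (predF t) m).2.2 := by
  by_cases h0 : (t : ℕ) = 0
  · left
    simp only [Eodd, dif_neg (predF_cond_neg t h0)]
    exact congrArg (fun s => D.a s m) (Fin.ext h0)
  · right
    simp only [Eodd, dif_pos (predF_cond_pos t h0)]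
    refine congrArg (fun s => D.a s m) (Fin.ext ?_)
    have h2 := t.isLt
    simp only [predF, if_neg h0]
    omega

lemma class_a (D : HData n ℓ v) (t : Fin ℓ) (m : Fin v) (z : Fin n × Fin n × Fin n)
    (hz : z ∈ edgesOf D)
    (hw : D.a t m = z.1 ∨ D.a t m = z.2.1 ∨ D.a t m = z.2.2) :
    z = Eeven D t m ∨ z = Eodd D (predF t) m := by
  obtain ⟨t', m', hz'⟩ := (mem_edges_iff D z).1 hz
  rcases hz' with rfl | rfl
  · simp only [Eeven] at hw
    rcases hw with hw | hw | hw
    · obtain ⟨ht, hm⟩ := a_inj D hw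
      subst ht; subst hm; exact Or.inl rfl
    · exact absurd hw (ab_ne D _ _ _ _)
    · exact absurd hw (ab_ne D _ _ _ _)
  · by_cases hc : (t' : ℕ) + 1 < ℓ
    · simp only [Eodd, dif_pos hc] at hw
      rcases hw with hw | hw | hw
      · exact absurd hw (ab_ne D _ _ _ _)
      · exact absurd hw (ab_ne D _ _ _ _)
      · obtain ⟨ht, hm⟩ := a_inj D hw
        subst hm
        right
        have hpt : predF t = t' := by
          apply Fin.ext
          have hval : (t : ℕ) = (t' : ℕ) + 1 := by rw [ht]
          simp only [predF, hval, if_neg (Nat.succ_ne_zero (t' : ℕ))]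
          omega
        rw [hpt]
    · simp only [Eodd, dif_neg hc] at hw
      rcases hw with hw | hw | hw
      · obtain ⟨ht, hm⟩ := a_inj D hw
        subst hm
        right
        have hpt : predF t = t' := by
          apply Fin.ext
          have h1 : (t : ℕ) = 0 := by rw [ht]
          have h2 := t'.isLt
          simp only [predF, h1, if_pos]
          omega
        rw [hpt]
      · exact absurd hw (ab_ne D _ _ _ _)
      · exact absurd hw (ab_ne D _ _ _ _)

lemma b_on_even (D : HData n ℓ v) (t : Fin ℓ) (j : Fin (2 * v)) :
    D.b t j = (Eeven D t ((D.e t).symm j).1).2.1 ∨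
      D.b t j = (Eeven D t ((D.e t).symm j).1).2.2 := by
  rcases fin2 ((D.e t).symm j).2 with h2 | h2
  · left
    simp only [Eeven]
    have hq : (D.e t).symm j = (((D.e t).symm j).1, (0 : Fin 2)) := by rw [← h2]
    rw [← hq, (D.e t).apply_symm_apply]
  · right
    simp only [Eeven]
    have hq : (D.e t).symm j = (((D.e t).symm j).1, (1 : Fin 2)) := by rw [← h2]
    rw [← hq, (D.e t).apply_symm_apply]

lemma b_on_odd (D : HData n ℓ v) (t : Fin ℓ) (j : Fin (2 * v)) :
    D.b t j = (Eodd D t ((D.f t).symm j).1).1 ∨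
      D.b t j = (Eodd D t ((D.f t).symm j).1).2.1 ∨
      D.b t j = (Eodd D t ((D.f t).symm j).1).2.2 := by
  have key : ∀ i : Fin 2, ((D.f t).symm j).2 = i →
      D.b t j = D.b t (D.f t (((D.f t).symm j).1, i)) := by
    intro i hi
    have hq : (D.f t).symm j = (((D.f t).symm j).1, i) := by rw [← hi]
    rw [← hq, (D.f t).apply_symm_apply]
  by_cases hc : (t : ℕ) + 1 < ℓ <;>
    rcases fin2 ((D.f t).symm j).2 with h2 | h2
  · exact Or.inl (by simp only [Eodd, dif_pos hc]; exact key 0 h2)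
  · exact Or.inr (Or.inl (by simp only [Eodd, dif_pos hc]; exact key 1 h2))
  · exact Or.inr (Or.inl (by simp only [Eodd, dif_neg hc]; exact key 0 h2))
  · exact Or.inr (Or.inr (by simp only [Eodd, dif_neg hc]; exact key 1 h2))

lemma class_b (D : HData n ℓ v) (t : Fin ℓ) (j : Fin (2 * v)) (z : Fin n × Fin n × Fin n)
    (hz : z ∈ edgesOf D)
    (hw : D.b t j = z.1 ∨ D.b t j = z.2.1 ∨ D.b t j = z.2.2) :
    z = Eeven D t ((D.e t).symm j).1 ∨ z = Eodd D t ((D.f t).symm j).1 := by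
  obtain ⟨t', m', hz'⟩ := (mem_edges_iff D z).1 hz
  have hstep_e : ∀ (i : Fin 2), D.b t j = D.b t' (D.e t' (m', i)) →
      Eeven D t' m' = Eeven D t ((D.e t).symm j).1 := by
    intro i hw
    obtain ⟨ht, hj⟩ := b_inj D hw
    subst ht
    have : (D.e t).symm j = (m', i) := by rw [hj, (D.e t).symm_apply_apply]
    rw [this]
  have hstep_f : ∀ (i : Fin 2), D.b t j = D.b t' (D.f t' (m', i)) →
      Eodd D t' m' = Eodd D t ((D.f t).symm j).1 := by
    intro i hw
    obtain ⟨ht, hj⟩ := b_inj D hw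
    subst ht
    have : (D.f t).symm j = (m', i) := by rw [hj, (D.f t).symm_apply_apply]
    rw [this]
  rcases hz' with rfl | rfl
  · simp only [Eeven] at hw
    rcases hw with hw | hw | hw
    · exact absurd hw.symm (ab_ne D _ _ _ _)
    · exact Or.inl (hstep_e 0 hw)
    · exact Or.inl (hstep_e 1 hw)
  · by_cases hc : (t' : ℕ) + 1 < ℓ
    · simp only [Eodd, dif_pos hc] at hw
      rcases hw with hw | hw | hw
      · exact Or.inr (hstep_f 0 hw)
      · exact Or.inr (hstep_f 1 hw)
      · exact absurd hw.symm (ab_ne D _ _ _ _)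
    · simp only [Eodd, dif_neg hc] at hw
      rcases hw with hw | hw | hw
      · exact absurd hw.symm (ab_ne D _ _ _ _)
      · exact Or.inr (hstep_f 0 hw)
      · exact Or.inr (hstep_f 1 hw)

lemma coords_distinct (D : HData n ℓ v) (z : Fin n × Fin n × Fin n) (hz : z ∈ edgesOf D) :
    z.1 ≠ z.2.1 ∧ z.1 ≠ z.2.2 ∧ z.2.1 ≠ z.2.2 := by
  have bb : ∀ (t : Fin ℓ) (g : (Fin v × Fin 2) ≃ Fin (2 * v)) (m : Fin v),
      D.b t (g (m, 0)) ≠ D.b t (g (m, 1)) := by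
    intro t g m h
    have := (b_inj D h).2
    have := g.injective this
    simp [Prod.ext_iff] at this
  obtain ⟨t, m, hz'⟩ := (mem_edges_iff D z).1 hz
  rcases hz' with rfl | rfl
  · exact ⟨ab_ne D _ _ _ _, ab_ne D _ _ _ _, bb t (D.e t) m⟩
  · by_cases hc : (t : ℕ) + 1 < ℓ <;> simp only [Eodd, dif_pos, dif_neg, hc]
    · exact ⟨bb t (D.f t) m, (ab_ne D _ _ _ _).symm ∘ Eq.symm ∘ Eq.symm,
        (ab_ne D _ _ _ _).symm⟩
    · exact ⟨ab_ne D _ _ _ _, ab_ne D _ _ _ _, bb t (D.f t) m⟩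

lemma Eeven_injective (D : HData n ℓ v) (t : Fin ℓ) : Function.Injective (Eeven D t) :=
  fun _ _ h => (a_inj D (congrArg Prod.fst h)).2

lemma Eodd_injective (D : HData n ℓ v) (t : Fin ℓ) : Function.Injective (Eodd D t) := by
  intro m m' h
  by_cases hc : (t : ℕ) + 1 < ℓ
  · simp only [Eodd, dif_pos hc] at h
    exact (a_inj D (congrArg (fun z => z.2.2) h)).2
  · simp only [Eodd, dif_neg hc] at h
    exact (a_inj D (congrArg Prod.fst h)).2

lemma card_inter_image {α β : Type*} [Fintype α] [DecidableEq β] (f : α → β)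
    (hf : Function.Injective f) (B : Finset β) :
    (Finset.image f Finset.univ ∩ B).card
      = (Finset.univ.filter fun m : α => f m ∈ B).card := by
  classical
  have : Finset.image f Finset.univ ∩ B
      = Finset.image f (Finset.univ.filter fun m => f m ∈ B) := by
    ext x
    simp only [Finset.mem_inter, Finset.mem_image, Finset.mem_filter, Finset.mem_univ,
      true_and]
    constructor
    · rintro ⟨⟨m, rfl⟩, hB⟩; exact ⟨m, hB, rfl⟩
    · rintro ⟨m, hB, rfl⟩; exact ⟨⟨m, rfl⟩, hB⟩
  rw [this, Finset.card_image_of_injective _ hf]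

lemma card_filter_comp_equiv {v : ℕ} (g : (Fin v × Fin 2) ≃ Fin (2 * v)) (P : Fin v → Prop)
    [DecidablePred P] :
    (Finset.univ.filter fun j : Fin (2 * v) => P (g.symm j).1).card
      = 2 * (Finset.univ.filter P).card := by
  classical
  have h1 : (Finset.univ.filter fun j : Fin (2 * v) => P (g.symm j).1)
      = Finset.image g (Finset.univ.filter fun q : Fin v × Fin 2 => P q.1) := by
    ext j
    simp only [Finset.mem_filter, Finset.mem_univ, true_and, Finset.mem_image]
    constructor
    · intro h; exact ⟨g.symm j, h, g.apply_symm_apply j⟩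
    · rintro ⟨q, hq, rfl⟩; simpa [g.symm_apply_apply] using hq
  have h2 : (Finset.univ.filter fun q : Fin v × Fin 2 => P q.1)
      = (Finset.univ.filter P) ×ˢ (Finset.univ : Finset (Fin 2)) := by
    ext q
    simp [Finset.mem_product, Finset.mem_filter]
  rw [h1, Finset.card_image_of_injective _ g.injective, h2, Finset.card_product]
  simp [Finset.card_univ, mul_comm]

lemma prop_step {n : ℕ} (A B : Finset (Fin n × Fin n × Fin n))
    (H : ∀ w ∈ vertsOf A ∩ vertsOf B, 2 ≤ degOf (A ∩ B) w)
    (x y : Fin n × Fin n × Fin n) (hx : x ∈ A ∩ B) (w : Fin n)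
    (hwx : w = x.1 ∨ w = x.2.1 ∨ w = x.2.2)
    (hclass : ∀ z ∈ A, (w = z.1 ∨ w = z.2.1 ∨ w = z.2.2) → z = x ∨ z = y) :
    y ∈ A ∩ B := by
  classical
  have hxA : x ∈ A := (Finset.mem_inter.1 hx).1
  have hxB : x ∈ B := (Finset.mem_inter.1 hx).2
  have hwA : w ∈ vertsOf A :=
    Finset.mem_biUnion.2 ⟨x, hxA, by rcases hwx with h | h | h <;> simp [h]⟩
  have hwB : w ∈ vertsOf B :=
    Finset.mem_biUnion.2 ⟨x, hxB, by rcases hwx with h | h | h <;> simp [h]⟩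
  have hdeg : 2 ≤ ((A ∩ B).filter fun z => w = z.1 ∨ w = z.2.1 ∨ w = z.2.2).card :=
    H w (Finset.mem_inter.2 ⟨hwA, hwB⟩)
  have hsub : ((A ∩ B).filter fun z => w = z.1 ∨ w = z.2.1 ∨ w = z.2.2)
      ⊆ ({x, y} : Finset _) := by
    intro z hzm
    rw [Finset.mem_filter] at hzm
    have := hclass z (Finset.mem_inter.1 hzm.1).1 hzm.2
    simpa [Finset.mem_insert, Finset.mem_singleton] using this
  have hc2 : ({x, y} : Finset (Fin n × Fin n × Fin n)).card
      ≤ ((A ∩ B).filter fun z => w = z.1 ∨ w = z.2.1 ∨ w = z.2.2).card := by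
    refine le_trans ?_ hdeg
    exact le_trans (Finset.card_insert_le x {y}) (by simp)
  have heq := Finset.eq_of_subset_of_card_le hsub hc2
  have : y ∈ ((A ∩ B).filter fun z => w = z.1 ∨ w = z.2.1 ∨ w = z.2.2) := by
    rw [heq]; simp
  exact (Finset.mem_filter.1 this).1

lemma deg_le_two (D : HData n ℓ v) (w : Fin n) : degOf (edgesOf D) w ≤ 2 := by
  classical
  unfold degOf
  rcases Finset.eq_empty_or_nonempty
      ((edgesOf D).filter fun z => w = z.1 ∨ w = z.2.1 ∨ w = z.2.2) with he | hne
  · rw [he]; simp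
  · obtain ⟨x, hx⟩ := hne
    have hxE := (Finset.mem_filter.1 hx).1
    have hxw := (Finset.mem_filter.1 hx).2
    have hform : (∃ t m, w = D.a t m) ∨ (∃ t j, w = D.b t j) := by
      obtain ⟨t, m, hz⟩ := (mem_edges_iff D x).1 hxE
      rcases hz with rfl | rfl
      · simp only [Eeven] at hxw
        rcases hxw with h | h | h
        · exact Or.inl ⟨t, m, h⟩
        · exact Or.inr ⟨t, _, h⟩
        · exact Or.inr ⟨t, _, h⟩
      · by_cases hc : (t : ℕ) + 1 < ℓ
        · simp only [Eodd, dif_pos hc] at hxw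
          rcases hxw with h | h | h
          · exact Or.inr ⟨t, _, h⟩
          · exact Or.inr ⟨t, _, h⟩
          · exact Or.inl ⟨_, m, h⟩
        · simp only [Eodd, dif_neg hc] at hxw
          rcases hxw with h | h | h
          · exact Or.inl ⟨_, m, h⟩
          · exact Or.inr ⟨t, _, h⟩
          · exact Or.inr ⟨t, _, h⟩
    have hpair : ∃ x₀ y₀ : Fin n × Fin n × Fin n,
        ((edgesOf D).filter fun z => w = z.1 ∨ w = z.2.1 ∨ w = z.2.2) ⊆ {x₀, y₀} := by
      rcases hform with ⟨t, m, rfl⟩ | ⟨t, j, rfl⟩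
      · refine ⟨Eeven D t m, Eodd D (predF t) m, fun z hz => ?_⟩
        have := class_a D t m z (Finset.mem_filter.1 hz).1 (Finset.mem_filter.1 hz).2
        simpa using this
      · refine ⟨Eeven D t ((D.e t).symm j).1, Eodd D t ((D.f t).symm j).1, fun z hz => ?_⟩
        have := class_b D t j z (Finset.mem_filter.1 hz).1 (Finset.mem_filter.1 hz).2
        simpa using this
    obtain ⟨x₀, y₀, hsub⟩ := hpair
    calc ((edgesOf D).filter fun z => w = z.1 ∨ w = z.2.1 ∨ w = z.2.2).card
        ≤ ({x₀, y₀} : Finset _).card := Finset.card_le_card hsub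
      _ ≤ 2 := le_trans (Finset.card_insert_le _ _) (by simp)

end Stmt16Aux


/-- for `α, β ∈ S_{ℓ,v}` with `r` shared vertices, `k` shared hyperedges and
`s` shared vertices of degree ≤ 1 in `α ∩ β`, one has `2r − s ≥ 3k`; moreover if `2r = 3k`
then either `α` and `β` are disjoint (`k = r = 0`) or every gap of `α` carries at least one
shared hyperedge and all gaps carry the same number of shared hyperedges.  Gaps are indexed
by `Fin ℓ × Fin 2`: `(t,0)` is the gap between levels `2t` and `2t+1` and `(t,1)` the gap
between levels `2t+1` and `2t+2` (cyclically). -/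
theorem stmt_16 (n ℓ v : ℕ) (Dα Dβ : HData n ℓ v)
    (A B : Finset (Fin n × Fin n × Fin n)) (hA : A = edgesOf Dα) (hB : B = edgesOf Dβ)
    (r k s : ℕ)
    (hr : r = (vertsOf A ∩ vertsOf B).card)
    (hk : k = (A ∩ B).card)
    (hs : s = ((vertsOf A ∩ vertsOf B).filter fun w => degOf (A ∩ B) w ≤ 1).card)
    (gapK : Fin ℓ × Fin 2 → ℕ)
    (hgapK : ∀ p : Fin ℓ × Fin 2,
      gapK p = ((if p.2 = 0 then evenGap Dα p.1 else oddGap Dα p.1) ∩ B).card) :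
    3 * k + s ≤ 2 * r ∧
      (2 * r = 3 * k →
        (k = 0 ∧ r = 0) ∨
          ((∀ p : Fin ℓ × Fin 2, 1 ≤ gapK p) ∧
            ∀ p q : Fin ℓ × Fin 2, gapK p = gapK q)) := by
  classical
  open Stmt16Aux in
  subst hA; subst hB; subst hr; subst hk; subst hs
  -- abbreviations
  have hvC : vertsOf (edgesOf Dα ∩ edgesOf Dβ)
      ⊆ vertsOf (edgesOf Dα) ∩ vertsOf (edgesOf Dβ) := by
    intro w hw
    obtain ⟨x, hxC, hwx⟩ := Finset.mem_biUnion.1 hw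
    exact Finset.mem_inter.2
      ⟨Finset.mem_biUnion.2 ⟨x, (Finset.mem_inter.1 hxC).1, hwx⟩,
       Finset.mem_biUnion.2 ⟨x, (Finset.mem_inter.1 hxC).2, hwx⟩⟩
  have key_sum : ∑ w ∈ vertsOf (edgesOf Dα) ∩ vertsOf (edgesOf Dβ),
      degOf (edgesOf Dα ∩ edgesOf Dβ) w = 3 * (edgesOf Dα ∩ edgesOf Dβ).card := by
    calc ∑ w ∈ vertsOf (edgesOf Dα) ∩ vertsOf (edgesOf Dβ),
          degOf (edgesOf Dα ∩ edgesOf Dβ) w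
        = ∑ w ∈ vertsOf (edgesOf Dα) ∩ vertsOf (edgesOf Dβ),
            ∑ x ∈ edgesOf Dα ∩ edgesOf Dβ,
              if w = x.1 ∨ w = x.2.1 ∨ w = x.2.2 then 1 else 0 := by
          refine Finset.sum_congr rfl fun w _ => ?_
          exact Finset.card_filter _ _
      _ = ∑ x ∈ edgesOf Dα ∩ edgesOf Dβ,
            ∑ w ∈ vertsOf (edgesOf Dα) ∩ vertsOf (edgesOf Dβ),
              if w = x.1 ∨ w = x.2.1 ∨ w = x.2.2 then 1 else 0 := Finset.sum_comm
      _ = ∑ x ∈ edgesOf Dα ∩ edgesOf Dβ, (3 : ℕ) := by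
          refine Finset.sum_congr rfl fun x hx => ?_
          rw [← Finset.card_filter]
          have hxA : x ∈ edgesOf Dα := (Finset.mem_inter.1 hx).1
          have hd := coords_distinct Dα x hxA
          have hcoords : ∀ u : Fin n, (u = x.1 ∨ u = x.2.1 ∨ u = x.2.2) →
              u ∈ vertsOf (edgesOf Dα) ∩ vertsOf (edgesOf Dβ) := by
            intro u hu
            exact hvC (Finset.mem_biUnion.2 ⟨x, hx, by rcases hu with h | h | h <;> simp [h]⟩)
          have hfil : ((vertsOf (edgesOf Dα) ∩ vertsOf (edgesOf Dβ)).filter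
                fun w => w = x.1 ∨ w = x.2.1 ∨ w = x.2.2)
              = {x.1, x.2.1, x.2.2} := by
            ext u
            simp only [Finset.mem_filter, Finset.mem_insert, Finset.mem_singleton]
            exact ⟨fun h => h.2, fun h => ⟨hcoords u h, h⟩⟩
          rw [hfil, Finset.card_insert_of_notMem (by simp [hd.1, hd.2.1]),
            Finset.card_insert_of_notMem (by simp [hd.2.2]), Finset.card_singleton]
      _ = 3 * (edgesOf Dα ∩ edgesOf Dβ).card := by
          rw [Finset.sum_const, smul_eq_mul, mul_comm]
  have hdeg2 : ∀ w : Fin n, degOf (edgesOf Dα ∩ edgesOf Dβ) w ≤ 2 := fun w =>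
    le_trans (Finset.card_le_card
      (Finset.filter_subset_filter _ Finset.inter_subset_left)) (deg_le_two Dα w)
  constructor
  · -- first part
    have hb1 : ∑ w ∈ (vertsOf (edgesOf Dα) ∩ vertsOf (edgesOf Dβ)).filter
          (fun w => degOf (edgesOf Dα ∩ edgesOf Dβ) w ≤ 1),
          degOf (edgesOf Dα ∩ edgesOf Dβ) w
        ≤ ((vertsOf (edgesOf Dα) ∩ vertsOf (edgesOf Dβ)).filter
            (fun w => degOf (edgesOf Dα ∩ edgesOf Dβ) w ≤ 1)).card * 1 := by
      have := Finset.sum_le_card_nsmul ((vertsOf (edgesOf Dα) ∩ vertsOf (edgesOf Dβ)).filter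
          (fun w => degOf (edgesOf Dα ∩ edgesOf Dβ) w ≤ 1))
          (degOf (edgesOf Dα ∩ edgesOf Dβ)) 1 (fun w hw => (Finset.mem_filter.1 hw).2)
      simpa using this
    have hb2 : ∑ w ∈ (vertsOf (edgesOf Dα) ∩ vertsOf (edgesOf Dβ)).filter
          (fun w => ¬ degOf (edgesOf Dα ∩ edgesOf Dβ) w ≤ 1),
          degOf (edgesOf Dα ∩ edgesOf Dβ) w
        ≤ ((vertsOf (edgesOf Dα) ∩ vertsOf (edgesOf Dβ)).filter
            (fun w => ¬ degOf (edgesOf Dα ∩ edgesOf Dβ) w ≤ 1)).card * 2 := by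
      have := Finset.sum_le_card_nsmul ((vertsOf (edgesOf Dα) ∩ vertsOf (edgesOf Dβ)).filter
          (fun w => ¬ degOf (edgesOf Dα ∩ edgesOf Dβ) w ≤ 1))
          (degOf (edgesOf Dα ∩ edgesOf Dβ)) 2 (fun w _ => hdeg2 w)
      simpa using this
    have hsplit : ∑ w ∈ (vertsOf (edgesOf Dα) ∩ vertsOf (edgesOf Dβ)).filter
          (fun w => degOf (edgesOf Dα ∩ edgesOf Dβ) w ≤ 1),
          degOf (edgesOf Dα ∩ edgesOf Dβ) w
        + ∑ w ∈ (vertsOf (edgesOf Dα) ∩ vertsOf (edgesOf Dβ)).filter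
            (fun w => ¬ degOf (edgesOf Dα ∩ edgesOf Dβ) w ≤ 1),
            degOf (edgesOf Dα ∩ edgesOf Dβ) w
        = ∑ w ∈ vertsOf (edgesOf Dα) ∩ vertsOf (edgesOf Dβ),
            degOf (edgesOf Dα ∩ edgesOf Dβ) w :=
      Finset.sum_filter_add_sum_filter_not _ _ _
    have hcards : ((vertsOf (edgesOf Dα) ∩ vertsOf (edgesOf Dβ)).filter
          (fun w => degOf (edgesOf Dα ∩ edgesOf Dβ) w ≤ 1)).card
        + ((vertsOf (edgesOf Dα) ∩ vertsOf (edgesOf Dβ)).filter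
            (fun w => ¬ degOf (edgesOf Dα ∩ edgesOf Dβ) w ≤ 1)).card
        = (vertsOf (edgesOf Dα) ∩ vertsOf (edgesOf Dβ)).card :=
      Finset.card_filter_add_card_filter_not _
    omega
  · -- second part
    intro h2r3k
    by_cases hk0 : (edgesOf Dα ∩ edgesOf Dβ).card = 0
    · exact Or.inl ⟨hk0, by omega⟩
    right
    have hsum2 : ∑ w ∈ vertsOf (edgesOf Dα) ∩ vertsOf (edgesOf Dβ),
        degOf (edgesOf Dα ∩ edgesOf Dβ) w
        = ∑ _w ∈ vertsOf (edgesOf Dα) ∩ vertsOf (edgesOf Dβ), 2 := by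
      rw [key_sum, Finset.sum_const, smul_eq_mul]
      omega
    have hH : ∀ w ∈ vertsOf (edgesOf Dα) ∩ vertsOf (edgesOf Dβ),
        degOf (edgesOf Dα ∩ edgesOf Dβ) w = 2 :=
      (Finset.sum_eq_sum_iff_of_le (fun i _ => hdeg2 i)).1 hsum2
    have H2 : ∀ w ∈ vertsOf (edgesOf Dα) ∩ vertsOf (edgesOf Dβ),
        2 ≤ degOf (edgesOf Dα ∩ edgesOf Dβ) w := fun w hw => (hH w hw).ge
    set ne' : Fin ℓ → ℕ :=
      fun t => (Finset.univ.filter fun m : Fin v => Eeven Dα t m ∈ edgesOf Dβ).card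
      with hne'
    set no' : Fin ℓ → ℕ :=
      fun t => (Finset.univ.filter fun m : Fin v => Eodd Dα t m ∈ edgesOf Dβ).card
      with hno'
    have hgapE : ∀ t : Fin ℓ, gapK (t, 0) = ne' t := by
      intro t
      rw [hgapK (t, 0), if_pos rfl, evenGap_eq,
        card_inter_image _ (Eeven_injective Dα t), hne']
    have hgapO : ∀ t : Fin ℓ, gapK (t, 1) = no' t := by
      intro t
      rw [hgapK (t, 1), if_neg (by simp : ¬ ((t, (1 : Fin 2)).2 = 0)), oddGap_eq,
        card_inter_image _ (Eodd_injective Dα t), hno']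
    have stepA : ∀ t : Fin ℓ, ne' t = no' (predF t) := by
      intro t
      have hiff : ∀ m : Fin v,
          Eeven Dα t m ∈ edgesOf Dβ ↔ Eodd Dα (predF t) m ∈ edgesOf Dβ := by
        intro m
        constructor
        · intro hBm
          have hx : Eeven Dα t m ∈ edgesOf Dα ∩ edgesOf Dβ :=
            Finset.mem_inter.2 ⟨Eeven_mem _ _ _, hBm⟩
          have := prop_step (edgesOf Dα) (edgesOf Dβ) H2 (Eeven Dα t m)
            (Eodd Dα (predF t) m) hx (Dα.a t m) (Or.inl rfl)
            (fun z hz hw => class_a Dα t m z hz hw)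
          exact (Finset.mem_inter.1 this).2
        · intro hBm
          have hx : Eodd Dα (predF t) m ∈ edgesOf Dα ∩ edgesOf Dβ :=
            Finset.mem_inter.2 ⟨Eodd_mem _ _ _, hBm⟩
          have hwx : Dα.a t m = (Eodd Dα (predF t) m).1 ∨
              Dα.a t m = (Eodd Dα (predF t) m).2.1 ∨
              Dα.a t m = (Eodd Dα (predF t) m).2.2 := by
            rcases a_on_odd Dα t m with h | h
            · exact Or.inl h
            · exact Or.inr (Or.inr h)
          have := prop_step (edgesOf Dα) (edgesOf Dβ) H2 (Eodd Dα (predF t) m)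
            (Eeven Dα t m) hx (Dα.a t m) hwx
            (fun z hz hw => (class_a Dα t m z hz hw).symm)
          exact (Finset.mem_inter.1 this).2
      rw [hne', hno']
      exact congrArg Finset.card (by ext m; simp [hiff m])
    have stepB : ∀ t : Fin ℓ, ne' t = no' t := by
      intro t
      have hT : (Finset.univ.filter
            fun j : Fin (2 * v) => Eeven Dα t ((Dα.e t).symm j).1 ∈ edgesOf Dβ)
          = (Finset.univ.filter
            fun j : Fin (2 * v) => Eodd Dα t ((Dα.f t).symm j).1 ∈ edgesOf Dβ) := by
        ext j
        simp only [Finset.mem_filter, Finset.mem_univ, true_and]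
        constructor
        · intro hBj
          have hx : Eeven Dα t ((Dα.e t).symm j).1 ∈ edgesOf Dα ∩ edgesOf Dβ :=
            Finset.mem_inter.2 ⟨Eeven_mem _ _ _, hBj⟩
          have hwx : Dα.b t j = (Eeven Dα t ((Dα.e t).symm j).1).1 ∨
              Dα.b t j = (Eeven Dα t ((Dα.e t).symm j).1).2.1 ∨
              Dα.b t j = (Eeven Dα t ((Dα.e t).symm j).1).2.2 := by
            rcases b_on_even Dα t j with h | h
            · exact Or.inr (Or.inl h)
            · exact Or.inr (Or.inr h)
          have := prop_step (edgesOf Dα) (edgesOf Dβ) H2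
            (Eeven Dα t ((Dα.e t).symm j).1) (Eodd Dα t ((Dα.f t).symm j).1) hx
            (Dα.b t j) hwx (fun z hz hw => class_b Dα t j z hz hw)
          exact (Finset.mem_inter.1 this).2
        · intro hBj
          have hx : Eodd Dα t ((Dα.f t).symm j).1 ∈ edgesOf Dα ∩ edgesOf Dβ :=
            Finset.mem_inter.2 ⟨Eodd_mem _ _ _, hBj⟩
          have := prop_step (edgesOf Dα) (edgesOf Dβ) H2
            (Eodd Dα t ((Dα.f t).symm j).1) (Eeven Dα t ((Dα.e t).symm j).1) hx
            (Dα.b t j) (b_on_odd Dα t j)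
            (fun z hz hw => (class_b Dα t j z hz hw).symm)
          exact (Finset.mem_inter.1 this).2
      have c1 : (Finset.univ.filter
            fun j : Fin (2 * v) => Eeven Dα t ((Dα.e t).symm j).1 ∈ edgesOf Dβ).card
          = 2 * (Finset.univ.filter fun m : Fin v => Eeven Dα t m ∈ edgesOf Dβ).card :=
        card_filter_comp_equiv (Dα.e t) (fun m => Eeven Dα t m ∈ edgesOf Dβ)
      have c2 : (Finset.univ.filter
            fun j : Fin (2 * v) => Eodd Dα t ((Dα.f t).symm j).1 ∈ edgesOf Dβ).card
          = 2 * (Finset.univ.filter fun m : Fin v => Eodd Dα t m ∈ edgesOf Dβ).card :=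
        card_filter_comp_equiv (Dα.f t) (fun m => Eodd Dα t m ∈ edgesOf Dβ)
      have hTc := congrArg Finset.card hT
      show (Finset.univ.filter fun m : Fin v => Eeven Dα t m ∈ edgesOf Dβ).card
          = (Finset.univ.filter fun m : Fin v => Eodd Dα t m ∈ edgesOf Dβ).card
      omega
    have hNoPred : ∀ t : Fin ℓ, no' t = no' (predF t) := fun t =>
      (stepB t).symm.trans (stepA t)
    obtain ⟨x, hxC⟩ := Finset.card_pos.1 (Nat.pos_of_ne_zero hk0)
    obtain ⟨t₀, m₀, hx0⟩ := (mem_edges_iff Dα x).1 (Finset.mem_inter.1 hxC).1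
    have hl : 0 < ℓ := t₀.pos
    have hconst : ∀ i (hi : i < ℓ), no' ⟨i, hi⟩ = no' ⟨0, hl⟩ := by
      intro i
      induction i with
      | zero => intro hi; rfl
      | succ i ih =>
        intro hi
        have hp : predF (⟨i + 1, hi⟩ : Fin ℓ) = ⟨i, by omega⟩ := by
          apply Fin.ext
          simp [predF]
        rw [hNoPred ⟨i + 1, hi⟩, hp, ih (by omega)]
    have hallno : ∀ t t' : Fin ℓ, no' t = no' t' := by
      intro t t'
      exact (hconst t.1 t.isLt).trans (hconst t'.1 t'.isLt).symm
    have hgapAll : ∀ p : Fin ℓ × Fin 2, gapK p = no' ⟨0, hl⟩ := by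
      rintro ⟨t, i⟩
      rcases fin2 i with rfl | rfl
      · rw [hgapE t, stepB t]; exact hallno t ⟨0, hl⟩
      · rw [hgapO t]; exact hallno t ⟨0, hl⟩
    have hpos : 1 ≤ no' ⟨0, hl⟩ := by
      rcases hx0 with rfl | rfl
      · have hm : m₀ ∈ Finset.univ.filter (fun m : Fin v => Eeven Dα t₀ m ∈ edgesOf Dβ) :=
          Finset.mem_filter.2 ⟨Finset.mem_univ _, (Finset.mem_inter.1 hxC).2⟩
        have h1 : 1 ≤ ne' t₀ := by
          rw [hne']; exact Finset.card_pos.2 ⟨m₀, hm⟩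
        calc 1 ≤ ne' t₀ := h1
          _ = no' t₀ := stepB t₀
          _ = no' ⟨0, hl⟩ := hallno t₀ ⟨0, hl⟩
      · have hm : m₀ ∈ Finset.univ.filter (fun m : Fin v => Eodd Dα t₀ m ∈ edgesOf Dβ) :=
          Finset.mem_filter.2 ⟨Finset.mem_univ _, (Finset.mem_inter.1 hxC).2⟩
        have h1 : 1 ≤ no' t₀ := by
          rw [hno']; exact Finset.card_pos.2 ⟨m₀, hm⟩
        exact h1.trans (hallno t₀ ⟨0, hl⟩).le
    exact ⟨fun p => by rw [hgapAll p]; exact hpos,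
      fun p q => by rw [hgapAll p, hgapAll q]⟩


end
end
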